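/- arXiv:2404.00794 — 8 statements merged into one kernel-verified Lean document; each statement's English description precedes it below -/
import Mathlib

section
/- Let t > 1 be an integer and let c_1 < c_2 < ... < c_m be positive reals satisfying c_{i+1} < t·c_i for all i in [m-1]. Then for any positive real Q ≤ t·c_m, there exist integers b_1, ..., b_m ∈ [0, t-1] such that |∑_{i=1}^m b_i·c_i − Q| ≤ c_1. -/
/-!
Greedy digits from the top: take `b_m = min ⌊Q / c_m⌋ (t - 1)`, so that the remainder
`Q - b_m c_m` lies in `[0, c_m]`, hence in `[0, t c_{m-1}]` by the growth condition, and
recurse on `c_1, …, c_{m-1}`. At the bottom the remainder lies in `[0, c_1]`.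
-/

open Finset

lemma exists_le_pred_sub_mul_mem_Icc {t : ℕ} {c Q : ℝ} (hc : 0 < c) (hQ₀ : 0 ≤ Q)
    (hQ : Q ≤ t * c) : ∃ b : ℕ, b ≤ t - 1 ∧ Q - b * c ∈ Set.Icc 0 c := by
  set b := min ⌊Q / c⌋₊ (t - 1)
  have hbQ : (b : ℝ) * c ≤ Q := by
    have hb : (b : ℝ) ≤ Q / c :=
      (Nat.cast_le.mpr (min_le_left _ _)).trans (Nat.floor_le (div_nonneg hQ₀ hc.le))
    exact (le_div_iff₀ hc).mp hb
  have hQb : Q ≤ (b + 1) * c := by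
    rcases le_total ⌊Q / c⌋₊ (t - 1) with h | h
    · have hlt := Nat.lt_floor_add_one (Q / c)
      rw [div_lt_iff₀ hc] at hlt
      simp only [b, min_eq_left h]
      exact hlt.le
    · have ht : (t : ℝ) ≤ (t - 1 : ℕ) + 1 := by exact_mod_cast (by omega : t ≤ t - 1 + 1)
      simp only [b, min_eq_right h]
      exact hQ.trans (mul_le_mul_of_nonneg_right ht hc.le)
  exact ⟨b, min_le_right _ _, by constructor <;> linarith⟩

lemma exists_le_pred_sub_sum_mul_mem_Icc {t m : ℕ} (hm : 1 ≤ m) {c : ℕ → ℝ}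
    (hpos : ∀ i ∈ Icc 1 m, 0 < c i) (hgrowth : ∀ i ∈ Ico 1 m, c (i + 1) ≤ t * c i)
    {Q : ℝ} (hQ₀ : 0 ≤ Q) (hQ : Q ≤ t * c m) :
    ∃ b : ℕ → ℕ, (∀ i ∈ Icc 1 m, b i ≤ t - 1) ∧
      Q - ∑ i ∈ Icc 1 m, (b i : ℝ) * c i ∈ Set.Icc 0 (c 1) := by
  induction m, hm using Nat.le_induction generalizing Q with
  | base =>
    obtain ⟨b, hb, hrem⟩ := exists_le_pred_sub_mul_mem_Icc (hpos 1 (by simp)) hQ₀ hQ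
    exact ⟨fun _ => b, fun _ _ => hb, by simpa using hrem⟩
  | succ m hm ih =>
    obtain ⟨B, hB, hrem₀, hrem⟩ :=
      exists_le_pred_sub_mul_mem_Icc (hpos (m + 1) (by simp)) hQ₀ hQ
    have hstep : c (m + 1) ≤ t * c m := hgrowth m (by simp [hm])
    obtain ⟨b, hb, hsum⟩ := ih (fun i hi => hpos i (Icc_subset_Icc_right m.le_succ hi))
      (fun i hi => hgrowth i (Ico_subset_Ico_right m.le_succ hi)) hrem₀ (hrem.trans hstep)
    refine ⟨Function.update b (m + 1) B, fun i hi => ?_, ?_⟩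
    · rcases eq_or_ne i (m + 1) with rfl | hne
      · simpa using hB
      · rw [Function.update_of_ne hne]
        exact hb i (by simp only [mem_Icc] at hi ⊢; omega)
    · have hlow : ∀ i ∈ Icc 1 m, (Function.update b (m + 1) B i : ℝ) * c i = b i * c i :=
        fun i hi => by rw [Function.update_of_ne (by simp only [mem_Icc] at hi; omega)]
      rw [sum_Icc_succ_top (by omega), sum_congr rfl hlow, Function.update_self]
      convert hsum using 1
      ring

theorem greedy_approx_general (t m : ℕ) (hm : 1 ≤ m) (c : ℕ → ℝ)
    (hpos : ∀ i ∈ Finset.Icc 1 m, 0 < c i)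
    (hmono : ∀ i ∈ Finset.Icc 1 (m - 1), c i < c (i + 1) ∧ c (i + 1) < t * c i)
    (Q : ℝ) (hQpos : 0 < Q) (hQ : Q ≤ t * c m) :
    ∃ b : ℕ → ℕ, (∀ i ∈ Finset.Icc 1 m, b i ≤ t - 1) ∧
      |(∑ i ∈ Finset.Icc 1 m, (b i : ℝ) * c i) - Q| ≤ c 1 := by
  have hgrowth : ∀ i ∈ Ico 1 m, c (i + 1) ≤ t * c i := fun i hi =>
    (hmono i (by simp only [mem_Ico, mem_Icc] at hi ⊢; omega)).2.le
  obtain ⟨b, hb, hrem₀, hrem⟩ :=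
    exists_le_pred_sub_sum_mul_mem_Icc hm hpos hgrowth hQpos.le hQ
  exact ⟨b, hb, abs_le.mpr ⟨by linarith [hpos 1 (by simp [hm])], by linarith⟩⟩

theorem greedy_approx (t m : ℕ) (ht : 1 < t) (hm : 1 ≤ m) (c : ℕ → ℝ)
    (hpos : ∀ i ∈ Finset.Icc 1 m, 0 < c i)
    (hmono : ∀ i ∈ Finset.Icc 1 (m - 1), c i < c (i + 1) ∧ c (i + 1) < t * c i)
    (Q : ℝ) (hQpos : 0 < Q) (hQ : Q ≤ t * c m) :
    ∃ b : ℕ → ℕ, (∀ i ∈ Finset.Icc 1 m, b i ≤ t - 1) ∧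
      |(∑ i ∈ Finset.Icc 1 m, (b i : ℝ) * c i) - Q| ≤ c 1 :=
  greedy_approx_general t m hm c hpos hmono Q hQpos hQ
end

section
/- Let m, n ∈ ℕ and let x_1, ..., x_n be a sequence of nonnegative reals satisfying ∑_{j=1}^{i} j·x_j ≤ (i−1)·m for all i ∈ [n]. Then ∑_{j=1}^{n} x_j ≤ 2m·(1 + log₂ n). -/
/-!
With `S i = ∑_{j ≤ i} j x_j`, Abel summation gives
`∑_{j ≤ n} x_j = S_n / n + ∑_{k < n} S_k / (k (k + 1))`.
Since all coefficients of the `S_k` are positive, the bounds `S_k ≤ (k - 1) m` bound the right side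
by `m + ∑_{1 ≤ k < n} m / (k + 1) = m H_n ≤ m (1 + ln n)`, and `ln n ≤ log₂ n`.
-/

open Finset

section Semiring

variable {R : Type*} [Semiring R]

def weightedPartialSum (x : ℕ → R) (i : ℕ) : R :=
  ∑ j ∈ Icc 1 i, (j : R) * x j

lemma weightedPartialSum_succ (x : ℕ → R) (k : ℕ) :
    weightedPartialSum x (k + 1) = weightedPartialSum x k + ((k : R) + 1) * x (k + 1) := by
  rw [weightedPartialSum, sum_Icc_succ_top (by omega), Nat.cast_succ, weightedPartialSum]

end Semiring

section OrderedField

variable {K : Type*} [Field K] [LinearOrder K] [IsStrictOrderedRing K]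

lemma sum_Icc_sub_weightedPartialSum_div_succ (x : ℕ → K) {k : ℕ} (hk : 0 < k) :
    ∑ j ∈ Icc 1 (k + 1), x j - weightedPartialSum x (k + 1) / ((k + 1 : ℕ) : K) =
      ∑ j ∈ Icc 1 k, x j - weightedPartialSum x k / k
        + weightedPartialSum x k / ((k : K) * (k + 1)) := by
  have hk' : (k : K) ≠ 0 := by positivity
  rw [sum_Icc_succ_top (by omega), weightedPartialSum_succ, Nat.cast_succ]
  field_simp
  ring

lemma sum_Icc_sub_weightedPartialSum_div_le {x : ℕ → K} {c : K} {n : ℕ} (hc : 0 ≤ c)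
    (h : ∀ i ∈ Icc 1 n, weightedPartialSum x i ≤ ((i : K) - 1) * c) {k : ℕ} (hk : 1 ≤ k)
    (hkn : k ≤ n) :
    ∑ j ∈ Icc 1 k, x j - weightedPartialSum x k / k ≤ c * (harmonic k - 1) := by
  induction k, hk using Nat.le_induction with
  | base => simp [weightedPartialSum]
  | succ k hk ih =>
    have hkpos : (0 : K) < k := by exact_mod_cast hk
    have hstep : weightedPartialSum x k / ((k : K) * (k + 1)) ≤ c * ((k : K) + 1)⁻¹ := by
      rw [div_le_iff₀ (by positivity)]
      calc weightedPartialSum x k ≤ ((k : K) - 1) * c := h k (mem_Icc.mpr ⟨hk, by omega⟩)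
        _ ≤ k * c := by nlinarith
        _ = c * ((k : K) + 1)⁻¹ * (k * (k + 1)) := by field_simp
    rw [sum_Icc_sub_weightedPartialSum_div_succ x hk, harmonic_succ]
    push_cast
    linarith [ih (by omega)]

theorem sum_Icc_le_mul_harmonic {x : ℕ → K} {c : K} {n : ℕ} (hc : 0 ≤ c)
    (h : ∀ i ∈ Icc 1 n, weightedPartialSum x i ≤ ((i : K) - 1) * c) :
    ∑ j ∈ Icc 1 n, x j ≤ c * harmonic n := by
  rcases Nat.eq_zero_or_pos n with rfl | hn
  · simp
  have hSn : weightedPartialSum x n / n ≤ c := by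
    rw [div_le_iff₀ (by exact_mod_cast hn)]
    nlinarith [h n (mem_Icc.mpr ⟨hn, le_rfl⟩)]
  linarith [sum_Icc_sub_weightedPartialSum_div_le hc h hn le_rfl]

end OrderedField

lemma Real.log_natCast_le_logb_two (n : ℕ) : Real.log n ≤ Real.logb 2 n := by
  have hlog2 : Real.log 2 ≤ 1 := by linarith [Real.log_two_lt_d9]
  rw [Real.logb, le_div_iff₀ (Real.log_pos one_lt_two)]
  nlinarith [Real.log_natCast_nonneg n]

theorem weighted_sum_bound_general (m n : ℕ) (x : ℕ → ℝ)
    (h : ∀ i ∈ Finset.Icc 1 n, ∑ j ∈ Finset.Icc 1 i, (j : ℝ) * x j ≤ ((i : ℝ) - 1) * m) :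
    ∑ j ∈ Finset.Icc 1 n, x j ≤ 2 * m * (1 + Real.logb 2 n) := by
  have hm : (0 : ℝ) ≤ m := m.cast_nonneg
  have hlogb : Real.log n ≤ Real.logb 2 n := Real.log_natCast_le_logb_two n
  have hlog : 0 ≤ Real.log n := Real.log_natCast_nonneg n
  calc ∑ j ∈ Icc 1 n, x j ≤ m * (harmonic n : ℝ) := sum_Icc_le_mul_harmonic hm h
    _ ≤ m * (1 + Real.log n) := by gcongr; exact harmonic_le_one_add_log n
    _ ≤ m * (1 + Real.logb 2 n) := by gcongr
    _ ≤ 2 * m * (1 + Real.logb 2 n) := by nlinarith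

theorem weighted_sum_bound (m n : ℕ) (x : ℕ → ℝ)
    (hx : ∀ j ∈ Finset.Icc 1 n, 0 ≤ x j)
    (h : ∀ i ∈ Finset.Icc 1 n, ∑ j ∈ Finset.Icc 1 i, (j : ℝ) * x j ≤ ((i : ℝ) - 1) * m) :
    ∑ j ∈ Finset.Icc 1 n, x j ≤ 2 * m * (1 + Real.logb 2 n) :=
  weighted_sum_bound_general m n x h
end

section
/- Fix integers d ≥ 2, t ∈ [d], and let p(z) = a_d z^d + ... + a_1 z + a_0 ∈ ℤ[z] with a_d > 0. For k, s ∈ ℕ define m_s(k) = p(k+s) − p(k) and the sequence b^{t,s}_j equal to (−1)^r·binom(t,r) when j = r·s for r ∈ [t], and 0 otherwise. Then there exist integers h_{r,i} for t ≤ r ≤ d, 0 ≤ i ≤ d−t with r ≥ t+i, depending only on p, d, t (not on s, k), such that ∑_j b^{t,s}_j · m_j(k) = ∑_{i=0}^{d−t} ∑_{r=t+i}^{d} h_{r,i}·s^{r−i}·k^i for all s, k ∈ ℕ, and moreover h_{d,d−t} ≠ 0, and if t ≤ d−1 then also h_{d,d−t−1} ≠ 0. -/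
/-!
Expanding `p (k + r s)` binomially, the coefficient of `s ^ m * k ^ j` in
`∑ r, (-1) ^ r * t.choose r * p (k + r s)` is `a_i * i.choose j` times the alternating power sum
`∑ r, (-1) ^ r * t.choose r * r ^ m` with `m = i - j`. This sum is `(-1) ^ t` times the `t`-th
forward difference of `x ^ m` at `0`, so it vanishes for `m < t`, equals `(-1) ^ t * t !` for
`m = t` and `(-1) ^ t * t ! * t (t + 1) / 2` for `m = t + 1`.
-/

open Finset Nat Function fwdDiff

def altPowSum (t m : ℕ) : ℤ := ∑ r ∈ range (t + 1), (-1) ^ r * t.choose r * r ^ m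

theorem altPowSum_eq_fwdDiff_iter (t m : ℕ) :
    altPowSum t m = (-1) ^ t * (Δ_[1])^[t] (fun x : ℤ ↦ x ^ m) 0 := by
  rw [fwdDiff_iter_eq_sum_shift, altPowSum, mul_sum]
  refine sum_congr rfl fun r hr ↦ ?_
  have hrt : r ≤ t := Nat.lt_succ_iff.mp (mem_range.mp hr)
  rw [smul_eq_mul, zero_add, nsmul_one, ← mul_assoc, ← mul_assoc, ← pow_add,
    show t + (t - r) = r + 2 * (t - r) by omega, pow_add, pow_mul]
  simp

theorem altPowSum_of_lt {t m : ℕ} (h : m < t) : altPowSum t m = 0 := by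
  simp [altPowSum_eq_fwdDiff_iter, fwdDiff_iter_pow_eq_zero_of_lt h]

theorem altPowSum_self (t : ℕ) : altPowSum t t = (-1) ^ t * t ! := by
  simp [altPowSum_eq_fwdDiff_iter, fwdDiff_iter_eq_factorial]

theorem fwdDiff_pow_eq_sum {R : Type*} [CommRing R] (m : ℕ) :
    Δ_[1] (fun x : R ↦ x ^ m) = ∑ i ∈ range m, m.choose i • fun x : R ↦ x ^ i := by
  ext x
  simp [nsmul_eq_mul, fwdDiff, add_pow, sum_range_succ, mul_comm]

theorem two_mul_fwdDiff_iter_pow_succ_zero {R : Type*} [CommRing R] (t : ℕ) :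
    2 * (Δ_[1])^[t] (fun x : R ↦ x ^ (t + 1)) 0 = (t + 1)! * t := by
  induction t with
  | zero => simp
  | succ t ih =>
    -- `Δ^[t+1] x^(t+2) = Δ^[t] (Δ x^(t+2))`, and only the top two terms of `Δ x^(t+2)` survive.
    have hlow : ∀ i ∈ range t, (Δ_[1])^[t] ((t + 2).choose i • fun x : R ↦ x ^ i) = 0 := by
      intro i hi
      rw [fwdDiff_iter_const_smul, fwdDiff_iter_pow_eq_zero_of_lt (by simp at hi; omega), smul_zero]
    rw [iterate_succ_apply, fwdDiff_pow_eq_sum, fwdDiff_iter_finsetSum, sum_range_succ,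
      sum_range_succ, sum_eq_zero hlow, zero_add, fwdDiff_iter_const_smul, fwdDiff_iter_const_smul,
      fwdDiff_iter_eq_factorial]
    simp only [Pi.add_apply, Pi.mul_apply, Pi.natCast_apply, nsmul_eq_mul]
    have hchoose : ((t + 2).choose t * 2 * t ! : R) = (t + 2) * (t + 1)! := by
      have := Nat.add_choose_mul_factorial_mul_factorial 2 t
      rw [add_comm 2 t, factorial_two, factorial_succ (t + 1)] at this
      exact_mod_cast congrArg (Nat.cast : ℕ → R) this
    rw [Nat.choose_succ_self_right, factorial_succ (t + 1)]
    push_cast at hchoose ⊢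
    linear_combination hchoose + (t + 2 : R) * ih

theorem altPowSum_succ_ne_zero {t : ℕ} (ht : t ≠ 0) : altPowSum t (t + 1) ≠ 0 := by
  have h2 := two_mul_fwdDiff_iter_pow_succ_zero (R := ℤ) t
  rw [altPowSum_eq_fwdDiff_iter]
  refine mul_ne_zero (pow_ne_zero _ (by norm_num)) fun h0 ↦ ?_
  rw [h0, mul_zero, eq_comm] at h2
  exact mul_ne_zero (by positivity) (by exact_mod_cast ht) h2

theorem sum_Icc_alternating_choose_mul_sub {R : Type*} [CommRing R] {t : ℕ} (ht : t ≠ 0)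
    (f : ℕ → R) :
    ∑ r ∈ Icc 1 t, (-1) ^ r * (t.choose r : R) * (f r - f 0)
      = ∑ r ∈ range (t + 1), (-1) ^ r * (t.choose r : R) * f r := by
  have hIcc : ∑ r ∈ Icc 1 t, (-1) ^ r * (t.choose r : R) * (f r - f 0)
      = ∑ r ∈ range (t + 1), (-1) ^ r * (t.choose r : R) * (f r - f 0) := by
    rw [range_eq_Ico, sum_eq_sum_Ico_succ_bot (by omega), Ico_add_one_right_eq_Icc]
    simp
  have hsum : ∑ r ∈ range (t + 1), (-1) ^ r * (t.choose r : R) = 0 := by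
    simpa using congrArg (Int.cast : ℤ → R) (Int.alternating_sum_range_choose_of_ne ht)
  rw [hIcc]
  simp only [mul_sub, sum_sub_distrib, ← sum_mul, hsum, zero_mul, sub_zero]

theorem sum_alternating_choose_mul_sum_pow_add (t d : ℕ) (a : ℕ → ℤ) (k s : ℤ) :
    ∑ r ∈ range (t + 1), (-1) ^ r * (t.choose r : ℤ) *
        ∑ i ∈ range (d + 1), a i * (k + r * s) ^ i
      = ∑ i ∈ range (d + 1), ∑ j ∈ range (i + 1),
          a i * i.choose j * altPowSum t (i - j) * s ^ (i - j) * k ^ j := by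
  simp_rw [altPowSum, add_pow, mul_sum, sum_mul]
  rw [sum_comm]
  refine sum_congr rfl fun i _ ↦ ?_
  rw [sum_comm]
  refine sum_congr rfl fun j _ ↦ sum_congr rfl fun r _ ↦ ?_
  ring

theorem sum_range_sum_range_eq_sum_range_sum_Icc {M : Type*} [AddCommMonoid M] (t d : ℕ)
    (F : ℕ → ℕ → M)
    (hF : ∀ i j, i < t + j → F i j = 0) :
    ∑ i ∈ range (d + 1), ∑ j ∈ range (i + 1), F i j
      = ∑ j ∈ range (d - t + 1), ∑ i ∈ Icc (t + j) d, F i j := by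
  have htrunc : ∀ i ∈ range (d + 1),
      ∑ j ∈ range (i + 1), F i j = ∑ j ∈ range (i + 1 - t), F i j :=
    fun i _ ↦ (sum_subset (fun j hj ↦ by simp at hj ⊢; omega)
      fun j _ hj ↦ hF i j (by simp at hj; omega)).symm
  rw [sum_congr rfl htrunc]
  exact sum_comm' fun i j ↦ by simp only [mem_range, mem_Icc]; omega

theorem mb_expansion_general (d t : ℕ) (ht1 : 1 ≤ t) (htd : t ≤ d)
    (a : ℕ → ℤ) (ha : 0 < a d)
    (P : ℤ → ℤ) (hP : ∀ z, P z = ∑ i ∈ Finset.range (d + 1), a i * z ^ i) :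
    ∃ h : ℕ → ℕ → ℤ, h d (d - t) ≠ 0 ∧ (t ≤ d - 1 → h d (d - t - 1) ≠ 0) ∧
      ∀ s k : ℕ,
        ∑ r ∈ Finset.Icc 1 t,
            (-1 : ℤ) ^ r * (t.choose r : ℤ) * (P ((k : ℤ) + r * s) - P k)
          = ∑ i ∈ Finset.range (d - t + 1), ∑ r ∈ Finset.Icc (t + i) d,
              h r i * (s : ℤ) ^ (r - i) * (k : ℤ) ^ i := by
  have hchoose : ∀ i ≤ d, (d.choose i : ℤ) ≠ 0 := fun i hi ↦ by
    exact_mod_cast (choose_pos hi).ne'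
  refine ⟨fun r i ↦ a r * r.choose i * altPowSum t (r - i), ?_, fun hle ↦ ?_, fun s k ↦ ?_⟩
  · dsimp only
    rw [Nat.sub_sub_self htd, altPowSum_self]
    exact mul_ne_zero (mul_ne_zero ha.ne' (hchoose _ (sub_le d t))) (by positivity)
  · dsimp only
    rw [show d - (d - t - 1) = t + 1 by omega]
    exact mul_ne_zero (mul_ne_zero ha.ne' (hchoose _ (by omega)))
      (altPowSum_succ_ne_zero (by omega))
  calc _ = ∑ r ∈ range (t + 1), (-1) ^ r * (t.choose r : ℤ) * P (k + r * s) := by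
        simpa using sum_Icc_alternating_choose_mul_sub (by omega) fun r ↦ P (k + r * s)
    _ = ∑ i ∈ range (d + 1), ∑ j ∈ range (i + 1),
          a i * i.choose j * altPowSum t (i - j) * s ^ (i - j) * k ^ j := by
        simp only [hP, sum_alternating_choose_mul_sum_pow_add]
    _ = _ := sum_range_sum_range_eq_sum_range_sum_Icc t d _ fun i j hij ↦ by
        rw [altPowSum_of_lt (by omega), mul_zero, zero_mul, zero_mul]

theorem mb_expansion (d t : ℕ) (hd : 2 ≤ d) (ht1 : 1 ≤ t) (htd : t ≤ d)
    (a : ℕ → ℤ) (ha : 0 < a d)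
    (P : ℤ → ℤ) (hP : ∀ z, P z = ∑ i ∈ Finset.range (d + 1), a i * z ^ i) :
    ∃ h : ℕ → ℕ → ℤ, h d (d - t) ≠ 0 ∧ (t ≤ d - 1 → h d (d - t - 1) ≠ 0) ∧
      ∀ s k : ℕ,
        ∑ r ∈ Finset.Icc 1 t,
            (-1 : ℤ) ^ r * (t.choose r : ℤ) * (P ((k : ℤ) + r * s) - P k)
          = ∑ i ∈ Finset.range (d - t + 1), ∑ r ∈ Finset.Icc (t + i) d,
              h r i * (s : ℤ) ^ (r - i) * (k : ℤ) ^ i :=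
  mb_expansion_general d t ht1 htd a ha P hP
end

section
/- Let p(z) ∈ ℤ[z] have degree d ≥ 2 with positive leading coefficient, and let m_s(k) = p(k+s) − p(k). There exists a constant q depending only on p and d such that for all t ∈ [d−1], all sufficiently large k, and every nonzero integer vector (c_1, ..., c_t) with |c_i| ≤ k/q for all i, one has |∑_{i=1}^{t} c_i·m_i(k)| > (1/2)·k^{d−t}. -/
/-!
By Taylor's formula, `∑ᵢ cᵢ (p(k + i) - p(k)) = ∑_{r ≥ 1} sᵣ hᵣ(k)`, where `sᵣ = ∑ᵢ cᵢ iʳ` and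
`hᵣ = hasseDeriv r p` has degree `d - r` and leading coefficient `(d choose r) a_d`, so that
`(7/8) kᵈ⁻ʳ ≤ |hᵣ(k)| ≤ B kᵈ⁻ʳ` for large `k`. The Vandermonde matrix of the nodes `1, …, t` is
invertible, so some `sᵣ` with `r ≤ t` is a nonzero integer. The term of the least such `r₀` has
size at least `(7/8) kᵈ⁻ʳ⁰`, while each later term is at most `(d + 1)ᵈ⁺¹ (k / q) · B kᵈ⁻ʳ`, which
is at most `B (d + 1)ᵈ⁺¹ kᵈ⁻ʳ⁰ / q`; for `q` large these cannot cancel the leading one.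
-/

open Finset Filter Polynomial

section WeightedPowerSum

variable {R : Type*} [CommRing R]

def weightedPowerSum (c : ℕ → R) (t r : ℕ) : R := ∑ i ∈ Icc 1 t, c i * (i : R) ^ r

theorem exists_weightedPowerSum_ne_zero [IsDomain R] [CharZero R] {c : ℕ → R} {t : ℕ}
    (hc : ∃ i ∈ Icc 1 t, c i ≠ 0) : ∃ r ∈ Icc 1 t, weightedPowerSum c t r ≠ 0 := by
  by_contra! h
  obtain ⟨i, hi, hci⟩ := hc
  have hsum (f : ℕ → R) : ∑ i ∈ Icc 1 t, f i = ∑ j : Fin t, f (j + 1) := by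
    rw [← Ico_add_one_right_eq_Icc, sum_Ico_eq_sum_range,
      Fin.sum_univ_eq_sum_range (fun j => f (j + 1))]
    simp only [add_comm, Nat.add_sub_cancel]
  -- `∑ c_j j ^ (r + 1) = ∑ (j c_j) j ^ r` is a Vandermonde system in the nodes `1, …, t`
  have hv : (fun j : Fin t => c (j + 1) * ((j + 1 : ℕ) : R)) = 0 := by
    refine Matrix.eq_zero_of_forall_pow_sum_mul_pow_eq_zero
      (f := fun j : Fin t => ((j + 1 : ℕ) : R)) (fun j j' hj => ?_) fun r => ?_
    · simpa [Fin.ext_iff] using hj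
    · have := h (r + 1) (mem_Icc.mpr ⟨r.succ_pos, r.isLt⟩)
      rw [weightedPowerSum, hsum] at this
      simpa only [pow_succ', mul_assoc] using this
  obtain ⟨j, rfl⟩ : ∃ j : Fin t, i = j + 1 := ⟨⟨i - 1, by grind⟩, by grind⟩
  simpa [Nat.cast_add_one_ne_zero, hci] using congrFun hv j

theorem abs_weightedPowerSum_le [LinearOrder R] [IsStrictOrderedRing R] {c : ℕ → R} {t : ℕ}
    {C : R} (hc : ∀ i ∈ Icc 1 t, |c i| ≤ C) (r : ℕ) :
    |weightedPowerSum c t r| ≤ t ^ (r + 1) * C := by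
  calc |weightedPowerSum c t r| ≤ ∑ i ∈ Icc 1 t, |c i * (i : R) ^ r| := abs_sum_le_sum_abs _ _
    _ ≤ #(Icc 1 t) • (t ^ r * C) := by
      refine sum_le_card_nsmul _ _ _ fun i hi => ?_
      have hit : (i : R) ≤ t := by exact_mod_cast (mem_Icc.mp hi).2
      rw [abs_mul, abs_pow, Nat.abs_cast, mul_comm]
      exact mul_le_mul (pow_le_pow_left₀ i.cast_nonneg hit r) (hc i hi) (abs_nonneg _)
        (pow_nonneg t.cast_nonneg r)
    _ = t ^ (r + 1) * C := by rw [Nat.card_Icc, nsmul_eq_mul, pow_succ']; push_cast; ring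

end WeightedPowerSum

section Increments

variable {R : Type*} [CommRing R]

theorem eval_add_sub_eval_eq_sum_hasseDeriv (p : R[X]) (x y : R) :
    p.eval (x + y) - p.eval x = ∑ r ∈ Icc 1 p.natDegree, (hasseDeriv r p).eval x * y ^ r := by
  rw [add_comm, ← taylor_eval, eval_eq_sum_range, natDegree_taylor, range_eq_Ico,
    sum_eq_sum_Ico_succ_bot p.natDegree.succ_pos, taylor_coeff_zero, pow_zero, mul_one,
    add_sub_cancel_left]
  exact sum_congr rfl fun r _ => by rw [taylor_coeff]

theorem sum_mul_eval_add_sub_eval (p : R[X]) (x : R) (c : ℕ → R) (t : ℕ) :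
    ∑ i ∈ Icc 1 t, c i * (p.eval (x + i) - p.eval x) =
      ∑ r ∈ Icc 1 p.natDegree, weightedPowerSum c t r * (hasseDeriv r p).eval x := by
  simp_rw [eval_add_sub_eval_eq_sum_hasseDeriv, weightedPowerSum, mul_sum, sum_mul]
  rw [sum_comm]
  exact sum_congr rfl fun _ _ => sum_congr rfl fun _ _ => by ring

theorem leadingCoeff_hasseDeriv [IsAddTorsionFree R] (p : R[X]) {r : ℕ} (hr : r ≤ p.natDegree) :
    (hasseDeriv r p).leadingCoeff = p.natDegree.choose r * p.leadingCoeff := by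
  rw [leadingCoeff, natDegree_hasseDeriv, hasseDeriv_coeff, Nat.sub_add_cancel hr, leadingCoeff]

end Increments

theorem eventually_abs_eval_hasseDeriv_bounds (p : ℝ[X]) (hp : 1 ≤ |p.leadingCoeff|) :
    ∀ᶠ x in atTop, ∀ r ∈ Icc 1 p.natDegree,
      7 / 8 * x ^ (p.natDegree - r) ≤ |(hasseDeriv r p).eval x| ∧
        |(hasseDeriv r p).eval x| ≤
          2 ^ (p.natDegree + 1) * |p.leadingCoeff| * x ^ (p.natDegree - r) := by
  refine (eventually_all_finset _).mpr fun r hr => ?_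
  have hrn := (mem_Icc.mp hr).2
  filter_upwards [(isEquivalent_atTop_lead (hasseDeriv r p)).isLittleO.bound
    (by norm_num : (0 : ℝ) < 1 / 8), eventually_ge_atTop 0] with x hx hx0
  rw [natDegree_hasseDeriv, leadingCoeff_hasseDeriv p hrn] at hx
  set L := (p.natDegree.choose r : ℝ) * p.leadingCoeff
  have hchoose : (1 : ℝ) ≤ p.natDegree.choose r := by exact_mod_cast Nat.choose_pos hrn
  have hL : 1 ≤ |L| := by
    rw [abs_mul, Nat.abs_cast]; nlinarith
  have hL' : |L| ≤ 2 ^ p.natDegree * |p.leadingCoeff| := by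
    rw [abs_mul, Nat.abs_cast]
    gcongr
    exact_mod_cast Nat.choose_le_two_pow _ _
  set m := p.natDegree - r
  set y := (hasseDeriv r p).eval x
  have hxm : 0 ≤ x ^ m := pow_nonneg hx0 m
  have hclose : |y - L * x ^ m| ≤ 1 / 8 * (|L| * x ^ m) := by
    simpa only [Pi.sub_apply, Real.norm_eq_abs, abs_mul, abs_pow, abs_of_nonneg hx0] using hx
  have hlow := abs_sub_abs_le_abs_sub (L * x ^ m) y
  have hupp := abs_sub_abs_le_abs_sub y (L * x ^ m)
  rw [abs_sub_comm] at hlow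
  rw [abs_mul, abs_of_nonneg hxm] at hlow hupp
  have hLx := mul_le_mul_of_nonneg_right hL hxm
  have hLx' := mul_le_mul_of_nonneg_right hL' hxm
  have : 0 ≤ 2 ^ p.natDegree * |p.leadingCoeff| * x ^ m := by positivity
  rw [pow_succ]
  constructor <;> linarith

theorem abs_sub_sum_Ioc_le_abs_sum_Icc {M : Type*} [AddCommGroup M] [LinearOrder M]
    [IsOrderedAddMonoid M] (f : ℕ → M) {r₀ n : ℕ} (hr₀ : r₀ ∈ Icc 1 n)
    (hf : ∀ r ∈ Ico 1 r₀, f r = 0) :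
    |f r₀| - ∑ r ∈ Ioc r₀ n, |f r| ≤ |∑ r ∈ Icc 1 n, f r| := by
  obtain ⟨h1, hn⟩ := mem_Icc.mp hr₀
  have hsplit : ∑ r ∈ Icc 1 n, f r = f r₀ + ∑ r ∈ Ioc r₀ n, f r := by
    rw [add_sum_Ioc_eq_sum_Icc hn]
    refine (sum_subset (Icc_subset_Icc_left h1) fun r hr hr' => hf r ?_).symm
    grind
  rw [hsplit]
  calc |f r₀| - ∑ r ∈ Ioc r₀ n, |f r| ≤ |f r₀| - |∑ r ∈ Ioc r₀ n, f r| :=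
        sub_le_sub_left (abs_sum_le_sum_abs _ _) _
    _ ≤ |f r₀ + ∑ r ∈ Ioc r₀ n, f r| := abs_sub_abs_le_abs_add _ _

theorem sum_Ioc_abs_mul_le {s w : ℕ → ℝ} {x S B : ℝ} {r₀ n : ℕ} (hx : 1 ≤ x) (hS : 0 ≤ S)
    (hB : 0 ≤ B) (hs : ∀ r ∈ Ioc r₀ n, |s r| ≤ S * x)
    (hw : ∀ r ∈ Ioc r₀ n, |w r| ≤ B * x ^ (n - r)) :
    ∑ r ∈ Ioc r₀ n, |s r * w r| ≤ n * (S * B) * x ^ (n - r₀) := by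
  calc ∑ r ∈ Ioc r₀ n, |s r * w r| ≤ #(Ioc r₀ n) • (S * B * x ^ (n - r₀)) := by
        refine sum_le_card_nsmul _ _ _ fun r hr => ?_
        have hrn := mem_Ioc.mp hr
        calc |s r * w r| = |s r| * |w r| := abs_mul _ _
          _ ≤ (S * x) * (B * x ^ (n - r)) :=
            mul_le_mul (hs r hr) (hw r hr) (abs_nonneg _) (by positivity)
          _ = S * B * x ^ (n - r + 1) := by ring
          _ ≤ S * B * x ^ (n - r₀) :=
            mul_le_mul_of_nonneg_left (pow_le_pow_right₀ hx (by omega)) (by positivity)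
    _ ≤ n * (S * B) * x ^ (n - r₀) := by
        rw [nsmul_eq_mul, ← mul_assoc]
        gcongr
        exact_mod_cast (Nat.card_Ioc r₀ n).trans_le (Nat.sub_le n r₀)

section CoefficientSum

variable {R : Type*} [Semiring R] {a : ℕ → R} {d : ℕ}

theorem coeff_sum_range_C_mul_X_pow (n : ℕ) :
    (∑ i ∈ range (d + 1), C (a i) * X ^ i).coeff n = if n < d + 1 then a n else 0 := by
  simp [finsetSum_coeff]

theorem natDegree_sum_range_C_mul_X_pow (ha : a d ≠ 0) :
    (∑ i ∈ range (d + 1), C (a i) * X ^ i).natDegree = d := by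
  refine natDegree_eq_of_le_of_coeff_ne_zero
    (natDegree_le_iff_coeff_eq_zero.mpr fun n hn => ?_) ?_
  · rw [coeff_sum_range_C_mul_X_pow, if_neg (by omega)]
  · rwa [coeff_sum_range_C_mul_X_pow, if_pos d.lt_succ_self]

theorem leadingCoeff_sum_range_C_mul_X_pow (ha : a d ≠ 0) :
    (∑ i ∈ range (d + 1), C (a i) * X ^ i).leadingCoeff = a d := by
  rw [leadingCoeff, natDegree_sum_range_C_mul_X_pow ha, coeff_sum_range_C_mul_X_pow,
    if_pos d.lt_succ_self]

end CoefficientSum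

theorem le_abs_sum_weightedPowerSum_mul {n t : ℕ} {x B Q : ℝ} {c : ℕ → ℤ} {w : ℕ → ℝ}
    (hx : 1 ≤ x) (ht : t ≤ n) (hB : 0 < B) (hQ : 4 * (n + 1) ^ (n + 2) * B ≤ Q)
    (hc : ∃ i ∈ Icc 1 t, c i ≠ 0) (hcQ : ∀ i ∈ Icc 1 t, |(c i : ℝ)| ≤ x / Q)
    (hw : ∀ r ∈ Icc 1 n, 7 / 8 * x ^ (n - r) ≤ |w r| ∧ |w r| ≤ B * x ^ (n - r)) :
    5 / 8 * x ^ (n - t) ≤ |∑ r ∈ Icc 1 n, weightedPowerSum (fun i => (c i : ℝ)) t r * w r| := by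
  set s := weightedPowerSum (fun i => (c i : ℝ)) t
  have hex : ∃ r, r ∈ Icc 1 t ∧ s r ≠ 0 := exists_weightedPowerSum_ne_zero (by simpa using hc)
  classical
  set r₀ := Nat.find hex
  obtain ⟨hr₀, hsr₀⟩ : r₀ ∈ Icc 1 t ∧ s r₀ ≠ 0 := Nat.find_spec hex
  have hr₀n : r₀ ∈ Icc 1 n := Icc_subset_Icc_right ht hr₀
  have hbelow : ∀ r ∈ Ico 1 r₀, s r * w r = 0 := fun r hr => by
    by_contra hne
    exact Nat.find_min hex (mem_Ico.mp hr).2 ⟨by grind, left_ne_zero_of_mul hne⟩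
  have hs_one : 1 ≤ |s r₀| := by
    have hs_int : s r₀ = ((weightedPowerSum c t r₀ : ℤ) : ℝ) := by simp [s, weightedPowerSum]
    rw [hs_int] at hsr₀ ⊢
    exact_mod_cast Int.one_le_abs (by exact_mod_cast hsr₀)
  have hhead : 7 / 8 * x ^ (n - r₀) ≤ |s r₀ * w r₀| := by
    rw [abs_mul]
    nlinarith [(hw r₀ hr₀n).1, abs_nonneg (w r₀)]
  have hQpos : 0 < Q := lt_of_lt_of_le (by positivity) hQ
  have hs : ∀ r ∈ Ioc r₀ n, |s r| ≤ (n + 1) ^ (n + 1) / Q * x := fun r hr => by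
    calc |s r| ≤ t ^ (r + 1) * (x / Q) := abs_weightedPowerSum_le hcQ r
      _ ≤ (n + 1) ^ (n + 1) * (x / Q) := by
        gcongr
        calc (t : ℝ) ^ (r + 1) ≤ (n + 1) ^ (r + 1) := by gcongr; exact_mod_cast ht.trans n.le_succ
          _ ≤ (n + 1) ^ (n + 1) := pow_le_pow_right₀ (by simp) (by grind)
      _ = (n + 1) ^ (n + 1) / Q * x := by ring
  have htail : ∑ r ∈ Ioc r₀ n, |s r * w r| ≤ 1 / 4 * x ^ (n - r₀) := by
    have hw' (r : ℕ) (hr : r ∈ Ioc r₀ n) : |w r| ≤ B * x ^ (n - r) :=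
      (hw r (Icc_subset_Icc_left (mem_Icc.mp hr₀n).1 (Ioc_subset_Icc_self hr))).2
    refine (sum_Ioc_abs_mul_le hx (by positivity) hB.le hs hw').trans ?_
    gcongr
    rw [div_mul_eq_mul_div, mul_div_assoc', div_le_iff₀ hQpos]
    rw [pow_succ] at hQ
    nlinarith [mul_le_mul_of_nonneg_right (le_add_of_nonneg_right zero_le_one : (n : ℝ) ≤ n + 1)
      (by positivity : 0 ≤ (n + 1 : ℝ) ^ (n + 1) * B)]
  have hpow : x ^ (n - t) ≤ x ^ (n - r₀) := pow_le_pow_right₀ hx (by grind)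
  linarith [abs_sub_sum_Ioc_le_abs_sum_Icc (fun r => s r * w r) hr₀n hbelow]

theorem independence_of_increments_general (d : ℕ) (a : ℕ → ℤ) (ha : 0 < a d)
    (P : ℤ → ℤ) (hP : ∀ z, P z = ∑ i ∈ Finset.range (d + 1), a i * z ^ i) :
    ∃ q : ℕ, 0 < q ∧ ∃ K : ℕ, ∀ k : ℕ, K ≤ k → ∀ t ∈ Finset.Icc 1 (d - 1),
      ∀ c : ℕ → ℤ, (∃ i ∈ Finset.Icc 1 t, c i ≠ 0) →
        (∀ i ∈ Finset.Icc 1 t, |(c i : ℝ)| ≤ (k : ℝ) / q) →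
        ((k : ℝ) ^ (d - t)) / 2 <
          |((∑ i ∈ Finset.Icc 1 t, c i * (P ((k : ℤ) + i) - P k) : ℤ) : ℝ)| := by
  set p : ℝ[X] := ∑ i ∈ range (d + 1), C (a i : ℝ) * X ^ i
  have had : (a d : ℝ) ≠ 0 := by exact_mod_cast ha.ne'
  have hPp (z : ℤ) : (P z : ℝ) = p.eval (z : ℝ) := by simp [hP, p, eval_finsetSum]
  have hbounds := eventually_abs_eval_hasseDeriv_bounds p
    (by rw [leadingCoeff_sum_range_C_mul_X_pow had]; exact_mod_cast Int.one_le_abs ha.ne')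
  rw [natDegree_sum_range_C_mul_X_pow had, leadingCoeff_sum_range_C_mul_X_pow had] at hbounds
  obtain ⟨K, hK⟩ := (tendsto_natCast_atTop_atTop.eventually hbounds).exists_forall_of_atTop
  refine ⟨2 ^ (d + 3) * (d + 1) ^ (d + 2) * (a d).natAbs, by positivity, max K 1, ?_⟩
  intro k hk t ht c hc hcq
  have hk1 : (1 : ℝ) ≤ k := by exact_mod_cast le_of_max_le_right hk
  have hexpand : ((∑ i ∈ Icc 1 t, c i * (P ((k : ℤ) + i) - P k) : ℤ) : ℝ) =
      ∑ r ∈ Icc 1 d,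
        weightedPowerSum (fun i => (c i : ℝ)) t r * (hasseDeriv r p).eval (k : ℝ) := by
    push_cast [hPp]
    rw [sum_mul_eval_add_sub_eval, natDegree_sum_range_C_mul_X_pow had]
  have hQ : 4 * (d + 1) ^ (d + 2) * (2 ^ (d + 1) * |(a d : ℝ)|) =
      ((2 ^ (d + 3) * (d + 1) ^ (d + 2) * (a d).natAbs : ℕ) : ℝ) := by
    push_cast [Nat.cast_natAbs, Int.cast_abs]; ring
  have hdom := le_abs_sum_weightedPowerSum_mul hk1 (by grind) (by positivity) hQ.le hc hcq
    (hK k (le_of_max_le_left hk))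
  rw [hexpand]
  linarith [pow_pos (zero_lt_one.trans_le hk1) (d - t)]

theorem independence_of_increments (d : ℕ) (hd : 2 ≤ d) (a : ℕ → ℤ) (ha : 0 < a d)
    (P : ℤ → ℤ) (hP : ∀ z, P z = ∑ i ∈ Finset.range (d + 1), a i * z ^ i) :
    ∃ q : ℕ, 0 < q ∧ ∃ K : ℕ, ∀ k : ℕ, K ≤ k → ∀ t ∈ Finset.Icc 1 (d - 1),
      ∀ c : ℕ → ℤ, (∃ i ∈ Finset.Icc 1 t, c i ≠ 0) →
        (∀ i ∈ Finset.Icc 1 t, |(c i : ℝ)| ≤ (k : ℝ) / q) →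
        ((k : ℝ) ^ (d - t)) / 2 <
          |((∑ i ∈ Finset.Icc 1 t, c i * (P ((k : ℤ) + i) - P k) : ℤ) : ℝ)| :=
  independence_of_increments_general d a ha P hP
end

section
/- Suppose 0 < 1/n ≪ η ≪ 1/ℓ ≪ 1 and m = η²n is an integer. Let G(n; m) be the reduced grid digraph on {(i,j) ∈ [0,n]² : |i−j| ≤ m} with arcs (i,j)→(i+1,j) and (i,j)→(i,j+1). Let Z be a set of vertices with (G1) |Z| ≤ m/10, and (G2) for every i ≤ m/ℓ, both the union of levels 0 through iℓ and the union of levels 2n−iℓ through 2n contain at most i−1 vertices of Z. Then G(n; m) contains a directed path from (0,0) to (n,n) avoiding all vertices of Z. -/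
/-!
Put `L = m + 1 - ℓ`. Every vertex of level at most `L` lies in the strip, and (G2) says that at
most `s` vertices of `Z` have level at most `s < L`. If `A` indexes the vertices of level `s` that
are reachable from `(0, 0)`, their out-neighbours are indexed by `A + {0, 1}`, which has at least
`|A| + 1` elements (Cauchy–Davenport in `ℕ`). So from one level to the next the number of
unreachable vertices grows at most by the number of obstacles on the new level, and at most `|Z|`
vertices of level `L` are unreachable from `(0, 0)`. Reflecting in the antidiagonal, the same holds
for reaching `(n, n)` backwards from level `2n - L`. Among the `L` vertices `(i, L - i)` with
`i < L`, at most `3|Z| ≤ 3m/10 < L` fail one of the two reachability conditions or have a vertex of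
`Z` on the staircase that starts there and climbs along the diagonals `j - i ∈ {L - 2i, L - 2i - 1}`
up to level `2n - L`. Any remaining start gives the path.
-/

open Finset Relation
open scoped Pointwise

def gridAdj (V : Set (ℕ × ℕ)) (p q : ℕ × ℕ) : Prop :=
  p ∈ V ∧ q ∈ V ∧ (q = (p.1 + 1, p.2) ∨ q = (p.1, p.2 + 1))

theorem gridAdj.level_succ {V : Set (ℕ × ℕ)} {p q : ℕ × ℕ} (h : gridAdj V p q) :
    q.1 + q.2 = p.1 + p.2 + 1 := by
  rcases h.2.2 with rfl | rfl <;> simp only <;> omega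

theorem exists_path_of_reflTransGen_gridAdj {V : Set (ℕ × ℕ)} {p q : ℕ × ℕ} (hp : p ∈ V)
    (h : ReflTransGen (gridAdj V) p q) :
    ∃ (k : ℕ) (f : ℕ → ℕ × ℕ), q.1 + q.2 = p.1 + p.2 + k ∧ f 0 = p ∧ f k = q ∧
      (∀ t < k, gridAdj V (f t) (f (t + 1))) ∧ ∀ t ≤ k, f t ∈ V := by
  induction h with
  | refl => exact ⟨0, fun _ => p, rfl, rfl, rfl, by simp, fun _ _ => hp⟩
  | @tail b c _ hbc ih =>
    obtain ⟨k, f, hk, hf0, hfk, hstep, hV⟩ := ih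
    refine ⟨k + 1, fun t => if t ≤ k then f t else c, by rw [hbc.level_succ, hk]; ring,
      by simp [hf0], by simp, fun t ht => ?_, fun t ht => ?_⟩
    · rcases (Nat.lt_succ_iff.mp ht).lt_or_eq with htk | rfl
      · simpa [htk.le, Nat.succ_le_of_lt htk] using hstep t htk
      · simpa [hfk] using hbc
    · rcases le_or_gt t k with htk | htk
      · simpa [htk] using hV t htk
      · simpa [htk.not_ge] using hbc.2.1

theorem reflTransGen_gridAdj_staircase {V : Set (ℕ × ℕ)} {a b k : ℕ}
    (hdiag : ∀ t ≤ k, (a + t, b + t) ∈ V) (hright : ∀ t < k, (a + t + 1, b + t) ∈ V) :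
    ReflTransGen (gridAdj V) (a, b) (a + k, b + k) := by
  induction k with
  | zero => rfl
  | succ k ih =>
    have hk := ih (fun t ht => hdiag t (by omega)) (fun t ht => hright t (by omega))
    have hr : (a + k + 1, b + k) ∈ V := hright k (by omega)
    exact (hk.tail ⟨hdiag k (by omega), hr, .inl rfl⟩).tail ⟨hr, hdiag (k + 1) le_rfl, .inr rfl⟩

def antiDiag (n : ℕ) (v : ℕ × ℕ) : ℕ × ℕ := (n - v.2, n - v.1)

theorem reflTransGen_gridAdj_antiDiag {V W : Set (ℕ × ℕ)} {n : ℕ}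
    (hVW : ∀ v ∈ V, v.1 ≤ n ∧ v.2 ≤ n ∧ antiDiag n v ∈ W) {p q : ℕ × ℕ}
    (h : ReflTransGen (gridAdj V) p q) :
    ReflTransGen (gridAdj W) (antiDiag n q) (antiDiag n p) := by
  rw [← reflTransGen_swap]
  refine ReflTransGen.lift (antiDiag n) (fun a b ⟨ha, hb, hab⟩ => ?_) p q h
  obtain ⟨-, -, ha'⟩ := hVW a ha
  obtain ⟨hb1, hb2, hb'⟩ := hVW b hb
  refine ⟨hb', ha', ?_⟩
  rcases hab with rfl | rfl
  · right; dsimp only [antiDiag] at hb1 ⊢; congr 1; omega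
  · left; dsimp only [antiDiag] at hb2 ⊢; congr 1; omega

open Classical in
/-- `i` stands for the vertex `(i, s - i)` of level `s`. -/
noncomputable def reachLevel (V : Set (ℕ × ℕ)) (s : ℕ) : Finset ℕ :=
  (range (s + 1)).filter fun i => (i, s - i) ∈ V ∧ ReflTransGen (gridAdj V) (0, 0) (i, s - i)

open Classical in
noncomputable def blockedLevel (V : Set (ℕ × ℕ)) (s : ℕ) : Finset ℕ :=
  (range (s + 1)).filter fun i => (i, s - i) ∉ V

theorem mem_reachLevel {V : Set (ℕ × ℕ)} {s i : ℕ} :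
    i ∈ reachLevel V s ↔
      i ≤ s ∧ (i, s - i) ∈ V ∧ ReflTransGen (gridAdj V) (0, 0) (i, s - i) := by
  simp [reachLevel]

theorem card_reachLevel_add_one_le {V : Set (ℕ × ℕ)} {s : ℕ} (hs : (reachLevel V s).Nonempty) :
    #(reachLevel V s) + 1 ≤ #(reachLevel V (s + 1)) + #(blockedLevel V (s + 1)) := by
  classical
  set A := reachLevel V s
  have hgrow : #A + 1 ≤ #(A + {0, 1}) := by
    simpa using cauchy_davenport_add_of_linearOrder_isCancelAdd hs (t := {0, 1}) ⟨0, by simp⟩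
  have hcover : A + {0, 1} ⊆ reachLevel V (s + 1) ∪ blockedLevel V (s + 1) := by
    intro i hi
    obtain ⟨a, ha, e, he, rfl⟩ := mem_add.mp hi
    obtain ⟨has, haV, hreach⟩ := mem_reachLevel.mp ha
    replace he : e = 0 ∨ e = 1 := by simpa using he
    by_cases hV : (a + e, s + 1 - (a + e)) ∈ V
    · have hstep : (a + e, s + 1 - (a + e)) = (a + 1, s - a) ∨
          (a + e, s + 1 - (a + e)) = (a, s - a + 1) := by
        rcases he with rfl | rfl <;> simp only [Prod.mk.injEq, add_zero, true_and] <;> omega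
      exact mem_union_left _ (mem_reachLevel.mpr ⟨by omega, hV, hreach.tail ⟨haV, hV, hstep⟩⟩)
    · exact mem_union_right _ (by simpa [blockedLevel] using ⟨by omega, hV⟩)
  exact hgrow.trans ((card_le_card hcover).trans (card_union_le _ _))

theorem card_blockedLevel_le {V : Set (ℕ × ℕ)} {Z : Finset (ℕ × ℕ)} {s : ℕ}
    (hV : ∀ v : ℕ × ℕ, v.1 + v.2 = s → v ∉ Z → v ∈ V) :
    #(blockedLevel V s) ≤ #(Z.filter fun v => v.1 + v.2 = s) := by
  refine card_le_card_of_injOn (fun i => (i, s - i)) (fun i hi => ?_)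
    fun i _ j _ h => congrArg Prod.fst h
  obtain ⟨his, hiV⟩ : i < s + 1 ∧ (i, s - i) ∉ V := by simpa [blockedLevel] using hi
  have hlevel : i + (s - i) = s := by omega
  exact mem_filter.2 ⟨by_contra fun hZ => hiV (hV _ hlevel hZ), hlevel⟩

theorem card_filter_add_le_succ (Z : Finset (ℕ × ℕ)) (s : ℕ) :
    #(Z.filter fun v => v.1 + v.2 ≤ s + 1) =
      #(Z.filter fun v => v.1 + v.2 ≤ s) + #(Z.filter fun v => v.1 + v.2 = s + 1) := by
  rw [← card_union_of_disjoint (disjoint_filter.2 fun _ _ h => by omega), ← filter_or]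
  exact congrArg card (filter_congr fun _ _ => by omega)

theorem le_card_reachLevel_add_card {V : Set (ℕ × ℕ)} {Z : Finset (ℕ × ℕ)} {L : ℕ}
    (hV : ∀ v : ℕ × ℕ, v.1 + v.2 ≤ L → v ∉ Z → v ∈ V)
    (hZ : ∀ s < L, #(Z.filter fun v => v.1 + v.2 ≤ s) ≤ s) :
    ∀ s ≤ L, s + 1 ≤ #(reachLevel V s) + #(Z.filter fun v => v.1 + v.2 ≤ s)
  | 0, _ => by
    by_cases h0 : ((0 : ℕ), (0 : ℕ)) ∈ Z
    · have : 0 < #(Z.filter fun v => v.1 + v.2 ≤ 0) := card_pos.2 ⟨_, mem_filter.2 ⟨h0, le_rfl⟩⟩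
      omega
    · have : 0 < #(reachLevel V 0) :=
        card_pos.2 ⟨0, mem_reachLevel.2 ⟨le_rfl, hV _ (Nat.zero_le L) h0, .refl⟩⟩
      omega
  | s + 1, hs => by
    have ih := le_card_reachLevel_add_card hV hZ s (by omega)
    have hne : (reachLevel V s).Nonempty := card_pos.1 (by have := hZ s (by omega); omega)
    have hgrow := card_reachLevel_add_one_le hne
    have hblocked := card_blockedLevel_le (Z := Z) (s := s + 1) fun v hv => hV v (by omega)
    have hsplit := card_filter_add_le_succ Z s
    omega

theorem card_range_sdiff_reachLevel_le {V : Set (ℕ × ℕ)} {Z : Finset (ℕ × ℕ)} {L : ℕ}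
    (hV : ∀ v : ℕ × ℕ, v.1 + v.2 ≤ L → v ∉ Z → v ∈ V)
    (hZ : ∀ s < L, #(Z.filter fun v => v.1 + v.2 ≤ s) ≤ s) :
    #(range (L + 1) \ reachLevel V L) ≤ #Z := by
  have hsub : reachLevel V L ⊆ range (L + 1) := fun i hi =>
    mem_range.2 (Nat.lt_succ_of_le (mem_reachLevel.1 hi).1)
  have := le_card_reachLevel_add_card hV hZ L le_rfl
  have := card_le_card (filter_subset (fun v : ℕ × ℕ => v.1 + v.2 ≤ L) Z)
  rw [card_sdiff_of_subset hsub, card_range]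
  omega

def gridFree (n m : ℕ) (Z : Finset (ℕ × ℕ)) : Set (ℕ × ℕ) :=
  {v | v.1 ≤ n ∧ v.2 ≤ n ∧ (v.1 : ℤ) - v.2 ≤ m ∧ (v.2 : ℤ) - v.1 ≤ m ∧ v ∉ Z}

theorem mem_gridFree_of_add_le {n m L : ℕ} {Z : Finset (ℕ × ℕ)} (hLm : L ≤ m) (hmn : m ≤ n)
    {v : ℕ × ℕ} (hv : v.1 + v.2 ≤ L) (hvZ : v ∉ Z) : v ∈ gridFree n m Z :=
  ⟨by omega, by omega, by omega, by omega, hvZ⟩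

theorem antiDiag_mem_gridFree {n m : ℕ} {Z : Finset (ℕ × ℕ)} {v : ℕ × ℕ}
    (hv : v ∈ gridFree n m (Z.image (antiDiag n))) : antiDiag n v ∈ gridFree n m Z := by
  obtain ⟨h1, h2, h12, h21, hvZ⟩ := hv
  refine ⟨Nat.sub_le _ _, Nat.sub_le _ _, by dsimp only [antiDiag]; omega,
    by dsimp only [antiDiag]; omega, fun hZ => hvZ (mem_image.2 ⟨_, hZ, ?_⟩)⟩
  simp only [antiDiag]
  congr 1 <;> omega

theorem card_filter_image_antiDiag_le {n : ℕ} {Z : Finset (ℕ × ℕ)}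
    (hZ : ∀ v ∈ Z, v.1 ≤ n ∧ v.2 ≤ n) (s : ℕ) :
    #((Z.image (antiDiag n)).filter fun v => v.1 + v.2 ≤ s) ≤
      #(Z.filter fun v => 2 * n - s ≤ v.1 + v.2) := by
  rw [filter_image]
  refine card_image_le.trans (card_le_card fun v hv => ?_)
  obtain ⟨hvZ, hvs⟩ := mem_filter.1 hv
  have := hZ v hvZ
  simp only [antiDiag] at hvs
  exact mem_filter.2 ⟨hvZ, by omega⟩

theorem exists_lt_notMem_of_card_add_lt {A B C : Finset ℕ} {L : ℕ} (h : #A + #B + #C < L) :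
    ∃ i < L, i ∉ A ∧ i ∉ B ∧ i ∉ C := by
  have : #(A ∪ B ∪ C) < #(range L) := by
    have := card_union_le (A ∪ B) C
    have := card_union_le A B
    rw [card_range]
    omega
  obtain ⟨i, hi, hABC⟩ := exists_mem_notMem_of_card_lt_card this
  simp only [mem_union, not_or] at hABC
  exact ⟨i, mem_range.1 hi, hABC.1.1, hABC.1.2, hABC.2⟩

theorem reflTransGen_gridAdj_zero_corner {n m L : ℕ} {Z : Finset (ℕ × ℕ)} (hLm : L ≤ m)
    (hmn : m ≤ n) (hZ : ∀ v ∈ Z, v.1 ≤ n ∧ v.2 ≤ n)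
    (hlow : ∀ s < L, #(Z.filter fun v => v.1 + v.2 ≤ s) ≤ s)
    (hhigh : ∀ s < L, #(Z.filter fun v => 2 * n - s ≤ v.1 + v.2) ≤ s) (hcard : 3 * #Z < L) :
    ReflTransGen (gridAdj (gridFree n m Z)) (0, 0) (n, n) := by
  set Z' := Z.image (antiDiag n)
  have hfwd := card_range_sdiff_reachLevel_le (V := gridFree n m Z)
    (fun _ hv hvZ => mem_gridFree_of_add_le hLm hmn hv hvZ) hlow
  have hbwd := (card_range_sdiff_reachLevel_le (V := gridFree n m Z')
    (fun _ hv hvZ => mem_gridFree_of_add_le hLm hmn hv hvZ)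
    fun s hs => (card_filter_image_antiDiag_le hZ s).trans (hhigh s hs)).trans card_image_le
  -- the staircase starting at `(i, L - i)` meets `z` only if `i = (z.1 + L - z.2) / 2`
  have hstair : #(Z.image fun z => (z.1 + L - z.2) / 2) ≤ #Z := card_image_le
  obtain ⟨i, hiL, hfwd_i, hbwd_i, hstair_i⟩ := exists_lt_notMem_of_card_add_lt (L := L)
    (A := range (L + 1) \ reachLevel (gridFree n m Z) L)
    (B := range (L + 1) \ reachLevel (gridFree n m Z') L)
    (C := Z.image fun z => (z.1 + L - z.2) / 2) (by omega)
  simp only [mem_sdiff, mem_range, mem_image, not_exists, not_and, not_not]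
    at hfwd_i hbwd_i hstair_i
  obtain ⟨-, -, hF⟩ := mem_reachLevel.1 (hfwd_i (by omega))
  obtain ⟨-, -, hB⟩ := mem_reachLevel.1 (hbwd_i (by omega))
  have hM := reflTransGen_gridAdj_staircase (V := gridFree n m Z) (a := i) (b := L - i)
    (k := n - L)
    (fun t ht => ⟨by omega, by omega, by omega, by omega,
      fun hz => hstair_i _ hz (by dsimp only; omega)⟩)
    (fun t ht => ⟨by omega, by omega, by omega, by omega,
      fun hz => hstair_i _ hz (by dsimp only; omega)⟩)
  have hB' := reflTransGen_gridAdj_antiDiag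
    (fun v hv => ⟨hv.1, hv.2.1, antiDiag_mem_gridFree hv⟩) hB
  have hmid : (i + (n - L), L - i + (n - L)) = antiDiag n (i, L - i) := by
    simp only [antiDiag, Prod.mk.injEq]; omega
  have hcorner : antiDiag n (0, 0) = (n, n) := by simp [antiDiag]
  rw [← hcorner]
  exact hF.trans (hM.trans (hmid ▸ hB'))

theorem le_div_of_le_mul_sub_one {c : ℕ → ℕ} (hc : Monotone c) {ℓ m : ℕ} (hℓ : 1 ≤ ℓ)
    (h : ∀ i, 1 ≤ i → i * ℓ ≤ m → c (i * ℓ) ≤ i - 1) {s : ℕ} (hs : s + ℓ ≤ m) :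
    c s ≤ s / ℓ := by
  have hlt : s < (s / ℓ + 1) * ℓ := by rw [add_one_mul]; exact Nat.lt_div_mul_add hℓ
  have hle : (s / ℓ + 1) * ℓ ≤ m := by
    rw [add_one_mul]; have := Nat.div_mul_le_self s ℓ; omega
  simpa using (hc hlt.le).trans (h _ (Nat.le_add_left 1 _) hle)

theorem two_mul_le_and_le_of_cast_eq {η : ℝ} (hη : 0 < η) (hη1 : η < 1) {ℓ n m : ℕ}
    (hn : ⌈2 * ℓ / η ^ 2⌉₊ ≤ n) (hm : (m : ℝ) = η ^ 2 * n) : 2 * ℓ ≤ m ∧ m ≤ n := by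
  have hη2 : 0 < η ^ 2 := by positivity
  constructor
  · have : (2 * ℓ : ℝ) ≤ m := by
      rw [hm, ← div_le_iff₀' hη2]; exact (Nat.le_ceil _).trans (by exact_mod_cast hn)
    exact_mod_cast this
  · have : (m : ℝ) ≤ n := by
      rw [hm]; exact mul_le_of_le_one_left n.cast_nonneg (by nlinarith)
    exact_mod_cast this

theorem grid_path_avoiding (ℓ : ℕ) (hℓ : 1 ≤ ℓ) :
    ∃ η₀ : ℝ, 0 < η₀ ∧ ∀ η : ℝ, 0 < η → η < η₀ →
      ∃ n₀ : ℕ, ∀ n : ℕ, n₀ ≤ n → ∀ m : ℕ, (m : ℝ) = η ^ 2 * n →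
        ∀ Z : Finset (ℕ × ℕ),
          (∀ v ∈ Z, v.1 ≤ n ∧ v.2 ≤ n ∧ (v.1 : ℤ) - v.2 ≤ m ∧ (v.2 : ℤ) - v.1 ≤ m) →
          10 * Z.card ≤ m →
          (∀ i : ℕ, 1 ≤ i → i * ℓ ≤ m →
            (Z.filter (fun v => v.1 + v.2 ≤ i * ℓ)).card ≤ i - 1 ∧
            (Z.filter (fun v => 2 * n - i * ℓ ≤ v.1 + v.2)).card ≤ i - 1) →
          ∃ f : ℕ → ℕ × ℕ, f 0 = (0, 0) ∧ f (2 * n) = (n, n) ∧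
            (∀ j < 2 * n, f (j + 1) = ((f j).1 + 1, (f j).2) ∨
                          f (j + 1) = ((f j).1, (f j).2 + 1)) ∧
            (∀ j ≤ 2 * n, (f j).1 ≤ n ∧ (f j).2 ≤ n ∧
              ((f j).1 : ℤ) - (f j).2 ≤ m ∧ ((f j).2 : ℤ) - (f j).1 ≤ m ∧ f j ∉ Z) := by
  refine ⟨1, one_pos, fun η hη hη1 => ⟨⌈2 * ℓ / η ^ 2⌉₊, fun n hn m hm Z hZ hcard hG2 => ?_⟩⟩
  obtain ⟨hℓm, hmn⟩ := two_mul_le_and_le_of_cast_eq hη hη1 hn hm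
  have hlow : ∀ s < m + 1 - ℓ, #(Z.filter fun v => v.1 + v.2 ≤ s) ≤ s := fun s hs =>
    (le_div_of_le_mul_sub_one (c := fun s => #(Z.filter fun v => v.1 + v.2 ≤ s))
      (fun _ _ hab => card_le_card (monotone_filter_right _ fun _ _ h => h.trans hab)) hℓ
      (fun i hi him => (hG2 i hi him).1) (by omega)).trans (Nat.div_le_self _ _)
  have hhigh : ∀ s < m + 1 - ℓ, #(Z.filter fun v => 2 * n - s ≤ v.1 + v.2) ≤ s := fun s hs =>
    (le_div_of_le_mul_sub_one (c := fun s => #(Z.filter fun v => 2 * n - s ≤ v.1 + v.2))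
      (fun _ _ hab => card_le_card (monotone_filter_right _ fun _ _ h => by omega)) hℓ
      (fun i hi him => (hG2 i hi him).2) (by omega)).trans (Nat.div_le_self _ _)
  have h00 : ((0 : ℕ), (0 : ℕ)) ∈ gridFree n m Z := by
    refine mem_gridFree_of_add_le (Nat.zero_le m) hmn le_rfl fun h0 => ?_
    have : 0 < #(Z.filter fun v => v.1 + v.2 ≤ 0) := card_pos.2 ⟨_, mem_filter.2 ⟨h0, le_rfl⟩⟩
    have := hlow 0 (by omega)
    omega
  obtain ⟨k, f, hk, hf0, hfk, hstep, hV⟩ := exists_path_of_reflTransGen_gridAdj h00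
    (reflTransGen_gridAdj_zero_corner (L := m + 1 - ℓ) (by omega) hmn
      (fun v hv => ⟨(hZ v hv).1, (hZ v hv).2.1⟩) hlow hhigh (by omega))
  obtain rfl : k = 2 * n := by simp only at hk; omega
  exact ⟨f, hf0, hfk, fun j hj => (hstep j hj).2.2, hV⟩
end

section
/- Let p(z) ∈ ℤ[z] be a polynomial of degree d ≥ 2 with positive leading coefficient, φ: ℕ → {−1, 1} a coloring, and k a sufficiently large integer with φ(k) = +1 and φ(k+1) = −1. Write m_s(k) = p(k+s) − p(k). Call a pair {a, b} ⊆ ℕ (k,s)-bad if b = a + m_s(k), φ(k+s) = −1, φ(a) = +1, and φ(b) = −1. If {a, b} is a (k,s)-bad pair, then either (a, p(k)−a, k) or (b, p(k)−a, k+s) is a monochromatic solution of x + y = p(z) under φ. -/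
/-!
A polynomial with positive leading coefficient is eventually nondecreasing on the integers, since its
derivative is eventually nonnegative. So for large `k` the gap `y - x = p(k+s) - p(k)` is nonnegative,
and it is nonzero because `x` and `y` have different colours; hence `p(k) - x ≥ y - x > 0`, and the
colour of `p(k) - x` decides which of the two triples is monochromatic.
-/

open Polynomial Set

namespace Polynomial

theorem leadingCoeff_sum_range_C_mul_X_pow {R : Type*} [Semiring R] (c : ℕ → R) {d : ℕ}
    (hc : c d ≠ 0) : (∑ i ∈ Finset.range (d + 1), C (c i) * X ^ i).leadingCoeff = c d := by
  have hcoeff (n : ℕ) :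
      (∑ i ∈ Finset.range (d + 1), C (c i) * X ^ i).coeff n = if n ≤ d then c n else 0 := by
    simp only [finsetSum_coeff, coeff_C_mul, coeff_X_pow, mul_ite, mul_one, mul_zero,
      Finset.sum_ite_eq, Finset.mem_range, Nat.lt_succ_iff]
  have hdeg : (∑ i ∈ Finset.range (d + 1), C (c i) * X ^ i).natDegree = d :=
    natDegree_eq_of_le_of_coeff_ne_zero
      (natDegree_le_iff_coeff_eq_zero.2 fun n hn => by rw [hcoeff, if_neg (by omega)])
      (by rwa [hcoeff, if_pos le_rfl])
  rw [leadingCoeff, hdeg, hcoeff, if_pos le_rfl]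

theorem exists_forall_ge_eval_nonneg {p : ℝ[X]} (hp : 0 ≤ p.leadingCoeff) :
    ∃ N, ∀ x, N ≤ x → 0 ≤ p.eval x := by
  rcases eq_or_ne p 0 with rfl | hp0
  · exact ⟨0, fun x _ => by simp⟩
  obtain ⟨N, hN⟩ := (p.finite_setOfPred_isRoot hp0).bddAbove
  exact ⟨N, fun x hx =>
    zero_le_eval_of_roots_le_of_leadingCoeff_nonneg (fun y hy => (hN hy).trans hx) hp⟩

theorem exists_monotoneOn_Ici {p : ℝ[X]} (hp : 0 ≤ p.leadingCoeff) :
    ∃ N, MonotoneOn (fun x => p.eval x) (Ici N) := by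
  obtain ⟨N, hN⟩ := exists_forall_ge_eval_nonneg (p := derivative p)
    (by rw [leadingCoeff_derivative]; positivity)
  refine ⟨N, monotoneOn_of_deriv_nonneg (convex_Ici N) p.continuousOn p.differentiableOn
    fun x hx => ?_⟩
  rw [interior_Ici] at hx
  rw [Polynomial.deriv]
  exact hN x (le_of_lt hx)

theorem exists_monotoneOn_Ici_int {p : ℤ[X]} (hp : 0 ≤ p.leadingCoeff) :
    ∃ N : ℕ, MonotoneOn (fun n : ℤ => p.eval n) (Ici (N : ℤ)) := by
  obtain ⟨N, hN⟩ := exists_monotoneOn_Ici (p := p.map (Int.castRingHom ℝ))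
    (by rw [leadingCoeff_map_of_injective Int.cast_injective]; exact Int.cast_nonneg hp)
  refine ⟨⌈N⌉₊, fun m hm n hn hmn => ?_⟩
  have hNm : N ≤ m := (Nat.le_ceil N).trans (by exact_mod_cast hm)
  have hNn : N ≤ n := (Nat.le_ceil N).trans (by exact_mod_cast hn)
  have := hN hNm hNn (Int.cast_le.2 hmn)
  simp only [eval_intCast_map, eq_intCast] at this
  exact_mod_cast this

end Polynomial

theorem bad_pair_gives_solution_general (d : ℕ) (a : ℕ → ℤ) (ha : 0 < a d)
    (P : ℤ → ℤ) (hP : ∀ z, P z = ∑ i ∈ Finset.range (d + 1), a i * z ^ i)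
    (φ : ℤ → ℤ) (hφ : ∀ x : ℤ, φ x = 1 ∨ φ x = -1) :
    ∃ k₀ : ℕ, ∀ k : ℕ, k₀ ≤ k → φ k = 1 → φ ((k : ℤ) + 1) = -1 →
      ∀ s : ℕ, 1 ≤ s → ∀ x y : ℤ, 0 < x → y ≤ P k →
        y = x + (P ((k : ℤ) + s) - P k) → φ ((k : ℤ) + s) = -1 → φ x = 1 → φ y = -1 →
        ((x + (P k - x) = P k ∧ 0 < P (k : ℤ) - x ∧
            φ x = 1 ∧ φ (P k - x) = 1 ∧ φ (k : ℤ) = 1) ∨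
         (y + (P k - x) = P ((k : ℤ) + s) ∧ 0 < P (k : ℤ) - x ∧
            φ y = -1 ∧ φ (P k - x) = -1 ∧ φ ((k : ℤ) + s) = -1)) := by
  set p : ℤ[X] := ∑ i ∈ Finset.range (d + 1), C (a i) * X ^ i
  have hPp (z : ℤ) : P z = p.eval z := by simp [hP, p, eval_finsetSum]
  obtain ⟨k₀, hmono⟩ := exists_monotoneOn_Ici_int (p := p)
    (by rw [leadingCoeff_sum_range_C_mul_X_pow a ha.ne']; exact ha.le)
  refine ⟨k₀, fun k hk hφk _ s _ x y _ hyP hy hφks hφx hφy => ?_⟩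
  have hPk : P k ≤ P (k + s) := by
    rw [hPp, hPp]
    exact hmono (by simpa using hk) (by rw [mem_Ici]; omega) (by simp)
  have hxy : x ≠ y := by rintro rfl; rw [hφx] at hφy; norm_num at hφy
  have hpos : 0 < P k - x := by omega
  rcases hφ (P k - x) with h | h
  · exact Or.inl ⟨by ring, hpos, hφx, h, hφk⟩
  · exact Or.inr ⟨by rw [hy]; ring, hpos, hφy, h, hφks⟩

theorem bad_pair_gives_solution (d : ℕ) (hd : 2 ≤ d) (a : ℕ → ℤ) (ha : 0 < a d)
    (P : ℤ → ℤ) (hP : ∀ z, P z = ∑ i ∈ Finset.range (d + 1), a i * z ^ i)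
    (φ : ℤ → ℤ) (hφ : ∀ x : ℤ, φ x = 1 ∨ φ x = -1) :
    ∃ k₀ : ℕ, ∀ k : ℕ, k₀ ≤ k → φ k = 1 → φ ((k : ℤ) + 1) = -1 →
      ∀ s : ℕ, 1 ≤ s → ∀ x y : ℤ, 0 < x → y ≤ P k →
        y = x + (P ((k : ℤ) + s) - P k) → φ ((k : ℤ) + s) = -1 → φ x = 1 → φ y = -1 →
        ((x + (P k - x) = P k ∧ 0 < P (k : ℤ) - x ∧
            φ x = 1 ∧ φ (P k - x) = 1 ∧ φ (k : ℤ) = 1) ∨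
         (y + (P k - x) = P ((k : ℤ) + s) ∧ 0 < P (k : ℤ) - x ∧
            φ y = -1 ∧ φ (P k - x) = -1 ∧ φ ((k : ℤ) + s) = -1)) :=
  bad_pair_gives_solution_general d a ha P hP φ hφ
end

section
/- Let p(z) ∈ ℤ[z] be non-odd of degree d ≥ 2 with positive leading coefficient. Then there is a constant C > 0 such that for all sufficiently large n there exists a 2-coloring of [n] = {1, ..., n} under which the number of monochromatic solutions (x, y, z) ∈ [n]³ of x + y = p(z) is at most C·n^{2/d²}. -/
/-!
Colour `[1, b) ∪ [a, n]` with one colour and `[b, a)` with the other, where `a` and `b` are the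
points at which the eventually increasing function `z ↦ P z` first exceeds `2n` and `2a - 2`.
In a monochromatic solution of `x + y = P z` the variable `z` cannot lie in `[b, a)` (then
`x + y ≤ 2a - 2 < P z`) nor in `[a, n]` (then `P z > 2n`), so `z < b`; then `x + y ≤ 2a - 2`
forces `min x y < a`, hence `min x y < b`. Since the remaining variable is determined by the
other two, there are at most `2b²` monochromatic solutions. As `P z ≥ c z^d` eventually,
`b^d = O(a)` and `a^d = O(n)`, so `b² = O(n^{2/d²})`.
-/

open Filter Polynomial

namespace Polynomial

theorem eventually_leadingCoeff_div_two_mul_pow_le_eval {p : ℝ[X]} (hp : 0 < p.leadingCoeff) :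
    ∀ᶠ x in atTop, p.leadingCoeff / 2 * x ^ p.natDegree ≤ p.eval x := by
  filter_upwards [p.isEquivalent_atTop_lead.isLittleO.bound (c := 1 / 2) (by norm_num),
    eventually_ge_atTop 0] with x hx hx0
  have hlead : 0 ≤ p.leadingCoeff * x ^ p.natDegree := by positivity
  rw [Pi.sub_apply, Real.norm_eq_abs, Real.norm_eq_abs, abs_of_nonneg hlead] at hx
  linarith [neg_abs_le (p.eval x - p.leadingCoeff * x ^ p.natDegree)]

theorem exists_monotoneOn_Ici_eval {p : ℝ[X]} (hp : 0 < p.leadingCoeff) :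
    ∃ x₀, MonotoneOn (fun x => p.eval x) (Set.Ici x₀) := by
  have hderiv : ∀ᶠ x in atTop, 0 ≤ p.derivative.eval x := by
    rcases eq_or_ne p.natDegree 0 with hdeg | hdeg
    · simp [derivative_eq_zero.2 hdeg]
    have hlead : 0 < p.derivative.leadingCoeff := by
      rw [leadingCoeff_derivative]
      exact mul_pos hp (by exact_mod_cast Nat.pos_of_ne_zero hdeg)
    filter_upwards [eventually_leadingCoeff_div_two_mul_pow_le_eval hlead,
      eventually_ge_atTop 0] with x hx hx0
    exact le_trans (by positivity) hx
  obtain ⟨x₀, hx₀⟩ := eventually_atTop.1 hderiv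
  refine ⟨x₀, monotoneOn_of_deriv_nonneg (convex_Ici x₀) p.continuousOn p.differentiableOn
    fun x hx => ?_⟩
  rw [Polynomial.deriv]
  exact hx₀ x (interior_subset hx)

end Polynomial

def IsThreshold (f : ℕ → ℤ) (t : ℤ) (b : ℕ) : Prop :=
  (∀ z < b, f z ≤ t) ∧ ∀ z, b ≤ z → t < f z

theorem exists_isThreshold {f : ℕ → ℤ} {M : ℕ} (hmono : MonotoneOn f (Set.Ici M))
    (htend : Tendsto f atTop atTop) {t : ℤ} (ht : ∀ z ≤ M, f z ≤ t) :
    ∃ b, IsThreshold f t b := by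
  classical
  have hex : ∃ z, t < f z := (htend.eventually_gt_atTop t).exists
  have hM : M < Nat.find hex := by
    by_contra! h
    exact (Nat.find_spec hex).not_ge (ht _ h)
  refine ⟨Nat.find hex, fun z hz => not_lt.1 (Nat.find_min hex hz), fun z hz => ?_⟩
  exact (Nat.find_spec hex).trans_le (hmono (Set.mem_Ici.2 hM.le) (Set.mem_Ici.2 (by omega)) hz)

theorem IsThreshold.lt_of_forall_le {f : ℕ → ℤ} {t : ℤ} {b N : ℕ} (hb : IsThreshold f t b)
    (hN : ∀ z ≤ N, f z ≤ t) : N < b := by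
  by_contra! h
  exact (hb.2 b le_rfl).not_ge (hN b h)

theorem IsThreshold.pow_le {f : ℕ → ℤ} {d N : ℕ} {c : ℝ} (hc : 0 < c)
    (hgrowth : ∀ z, N ≤ z → c * z ^ d ≤ f z) {t : ℤ} (ht : 1 ≤ t) {b : ℕ}
    (hb : IsThreshold f t b) : (b : ℝ) ^ d ≤ ((N + 1) ^ d + 2 ^ d / c) * t := by
  have ht' : (1 : ℝ) ≤ t := by exact_mod_cast ht
  rcases le_or_gt b (N + 1) with hbN | hbN
  · calc (b : ℝ) ^ d ≤ ((N : ℝ) + 1) ^ d := by gcongr; exact_mod_cast hbN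
      _ ≤ ((N : ℝ) + 1) ^ d * t := le_mul_of_one_le_right (by positivity) ht'
      _ ≤ ((N + 1) ^ d + 2 ^ d / c) * t := by gcongr; exact le_add_of_nonneg_right (by positivity)
  · have hpred : c * ((b - 1 : ℕ) : ℝ) ^ d ≤ t :=
      (hgrowth (b - 1) (by omega)).trans (by exact_mod_cast hb.1 (b - 1) (by omega))
    have hb2 : (b : ℝ) ≤ 2 * ((b - 1 : ℕ) : ℝ) := by
      rw [Nat.cast_sub (by omega)]
      have : (N : ℝ) + 2 ≤ b := by exact_mod_cast hbN
      push_cast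
      linarith [(N.cast_nonneg : (0 : ℝ) ≤ N)]
    calc (b : ℝ) ^ d ≤ (2 * ((b - 1 : ℕ) : ℝ)) ^ d := by gcongr
      _ = 2 ^ d * ((b - 1 : ℕ) : ℝ) ^ d := mul_pow _ _ _
      _ ≤ 2 ^ d * (t / c) := by gcongr; rw [le_div_iff₀ hc]; linarith
      _ = 2 ^ d / c * t := by ring
      _ ≤ ((N + 1) ^ d + 2 ^ d / c) * t := by gcongr; exact le_add_of_nonneg_left (by positivity)

def intervalColoring (a b x : ℕ) : Bool :=
  decide (x < b ∨ a ≤ x)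

def monochromaticSolutions (f : ℕ → ℤ) (φ : ℕ → Bool) (n : ℕ) : Finset (ℕ × ℕ × ℕ) :=
  (Finset.Icc 1 n ×ˢ Finset.Icc 1 n ×ˢ Finset.Icc 1 n).filter
    (fun v => (v.1 : ℤ) + v.2.1 = f v.2.2 ∧ φ v.1 = φ v.2.1 ∧ φ v.2.1 = φ v.2.2)

theorem lt_of_intervalColoring_eq {f : ℕ → ℤ} {n a b x y z : ℕ}
    (ha : ∀ z, a ≤ z → 2 * n < f z) (hb : IsThreshold f (2 * a - 2) b) (hx : x ≤ n) (hy : y ≤ n)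
    (hxyz : (x : ℤ) + y = f z) (hxy : intervalColoring a b x = intervalColoring a b y)
    (hyz : intervalColoring a b y = intervalColoring a b z) : z < b ∧ (x < b ∨ y < b) := by
  simp only [intervalColoring, decide_eq_decide] at hxy hyz
  have hzb : z < b := by
    by_contra! hzb
    have := ha z
    have := hb.2 z hzb
    omega
  have := hb.1 z hzb
  omega

theorem card_monochromaticSolutions_intervalColoring_le {f : ℕ → ℤ} {n a b : ℕ}
    (ha : ∀ z, a ≤ z → 2 * n < f z) (hb : IsThreshold f (2 * a - 2) b) :
    (monochromaticSolutions f (intervalColoring a b) n).card ≤ 2 * b ^ 2 := by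
  classical
  set S := Finset.range b ×ˢ Finset.range b
  have hsub : monochromaticSolutions f (intervalColoring a b) n ⊆
      S.image (fun w => (w.1, (f w.2 - w.1).toNat, w.2)) ∪
        S.image (fun w => ((f w.2 - w.1).toNat, w.1, w.2)) := by
    rintro ⟨x, y, z⟩ hv
    simp only [monochromaticSolutions, Finset.mem_filter, Finset.mem_product,
      Finset.mem_Icc] at hv
    obtain ⟨⟨⟨-, hx⟩, ⟨-, hy⟩, -⟩, hxyz, hxy, hyz⟩ := hv
    obtain ⟨hz, hxb | hyb⟩ := lt_of_intervalColoring_eq ha hb hx hy hxyz hxy hyz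
    · refine Finset.mem_union_left _ (Finset.mem_image.2 ⟨(x, z), by simp [S, hxb, hz], ?_⟩)
      simp only [← hxyz, add_sub_cancel_left, Int.toNat_natCast]
    · refine Finset.mem_union_right _ (Finset.mem_image.2 ⟨(y, z), by simp [S, hyb, hz], ?_⟩)
      simp only [← hxyz, add_sub_cancel_right, Int.toNat_natCast]
  calc _ ≤ _ := Finset.card_le_card hsub
    _ ≤ _ := Finset.card_union_le _ _
    _ ≤ S.card + S.card := add_le_add Finset.card_image_le Finset.card_image_le
    _ = 2 * b ^ 2 := by rw [Finset.card_product, Finset.card_range]; ring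

theorem sq_le_rpow_of_pow_le {d : ℕ} (hd : d ≠ 0) {x L y : ℝ} (hx : 0 ≤ x) (hL : 0 ≤ L)
    (hy : 0 ≤ y) (h : x ^ (d * d) ≤ L * y) :
    x ^ 2 ≤ L ^ ((2 : ℝ) / (d : ℝ) ^ 2) * y ^ ((2 : ℝ) / (d : ℝ) ^ 2) := by
  rw [← Real.mul_rpow hL hy]
  calc x ^ 2 = (x ^ (d * d)) ^ ((2 : ℝ) / (d : ℝ) ^ 2) := by
        rw [← Real.rpow_natCast x (d * d), ← Real.rpow_mul hx, ← Real.rpow_natCast x 2]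
        have : (d : ℝ) ≠ 0 := by exact_mod_cast hd
        congr 1
        push_cast
        field_simp
    _ ≤ (L * y) ^ ((2 : ℝ) / (d : ℝ) ^ 2) := by gcongr

theorem exists_coloring_card_monochromaticSolutions_le {f : ℕ → ℤ} {d M N : ℕ} {c : ℝ}
    (hd : d ≠ 0) (hmono : MonotoneOn f (Set.Ici M)) (htend : Tendsto f atTop atTop) (hc : 0 < c)
    (hgrowth : ∀ z, N ≤ z → c * z ^ d ≤ f z) :
    ∃ C : ℝ, 0 < C ∧ ∃ n₀ : ℕ, ∀ n : ℕ, n₀ ≤ n → ∃ φ : ℕ → Bool,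
      ((monochromaticSolutions f φ n).card : ℝ) ≤ C * (n : ℝ) ^ ((2 : ℝ) / (d : ℝ) ^ 2) := by
  set K : ℝ := (N + 1) ^ d + 2 ^ d / c
  have hK : 0 < K := by positivity
  obtain ⟨B, hB⟩ := ((Set.finite_Iic M).image f).bddAbove
  -- `a > N'` makes `2 * a - 2` exceed the bound `B` of `f` on `[0, M]`, so `b` exists.
  set N' := M + B.toNat + 1
  obtain ⟨B', hB'⟩ := ((Set.finite_Iic N').image f).bddAbove
  refine ⟨2 * (2 ^ (d + 1) * K ^ (d + 1)) ^ ((2 : ℝ) / (d : ℝ) ^ 2), by positivity,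
    B'.toNat + 1, fun n hn => ?_⟩
  obtain ⟨a, ha⟩ := exists_isThreshold hmono htend (t := 2 * n)
    fun z hz => (hB' ⟨z, Set.mem_Iic.2 (by omega), rfl⟩).trans (by omega)
  have haN' : N' < a := ha.lt_of_forall_le fun z hz => (hB' ⟨z, hz, rfl⟩).trans (by omega)
  obtain ⟨b, hb⟩ := exists_isThreshold hmono htend (t := 2 * a - 2)
    fun z hz => (hB ⟨z, hz, rfl⟩).trans (by omega)
  refine ⟨intervalColoring a b, ?_⟩
  have hapow : (a : ℝ) ^ d ≤ K * (2 * n) := by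
    simpa using ha.pow_le hc hgrowth (by omega)
  have hbpow : (b : ℝ) ^ d ≤ 2 * K * a :=
    calc (b : ℝ) ^ d ≤ K * ((2 * a - 2 : ℤ) : ℝ) := hb.pow_le hc hgrowth (by omega)
      _ ≤ 2 * K * a := by push_cast; linarith
  have hbb : (b : ℝ) ^ (d * d) ≤ 2 ^ (d + 1) * K ^ (d + 1) * n := by
    calc (b : ℝ) ^ (d * d) = ((b : ℝ) ^ d) ^ d := pow_mul _ _ _
      _ ≤ (2 * K * a) ^ d := by gcongr
      _ = (2 * K) ^ d * (a : ℝ) ^ d := by rw [mul_pow]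
      _ ≤ (2 * K) ^ d * (K * (2 * n)) := by gcongr
      _ = 2 ^ (d + 1) * K ^ (d + 1) * n := by rw [mul_pow, pow_succ, pow_succ]; ring
  have hcard : ((monochromaticSolutions f (intervalColoring a b) n).card : ℝ) ≤ 2 * b ^ 2 := by
    exact_mod_cast card_monochromaticSolutions_intervalColoring_le ha.2 hb
  have := sq_le_rpow_of_pow_le hd (by positivity) (by positivity) (by positivity) hbb
  linarith

theorem exists_coloring_card_monochromaticSolutions_le_of_eval {p : ℝ[X]}
    (hp : 0 < p.leadingCoeff) (hdeg : p.natDegree ≠ 0) {f : ℕ → ℤ}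
    (hf : ∀ z : ℕ, (f z : ℝ) = p.eval (z : ℝ)) :
    ∃ C : ℝ, 0 < C ∧ ∃ n₀ : ℕ, ∀ n : ℕ, n₀ ≤ n → ∃ φ : ℕ → Bool,
      ((monochromaticSolutions f φ n).card : ℝ) ≤
        C * (n : ℝ) ^ ((2 : ℝ) / (p.natDegree : ℝ) ^ 2) := by
  obtain ⟨x₀, hx₀⟩ := exists_monotoneOn_Ici_eval hp
  obtain ⟨N, hN⟩ := eventually_atTop.1
    (tendsto_natCast_atTop_atTop.eventually (eventually_leadingCoeff_div_two_mul_pow_le_eval hp))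
  have hmono : MonotoneOn f (Set.Ici ⌈x₀⌉₊) := fun u hu v hv huv => by
    have := hx₀ (Nat.ceil_le.1 hu) (Nat.ceil_le.1 hv) (Nat.cast_le.2 huv)
    simp only [← hf] at this
    exact_mod_cast this
  have htend : Tendsto f atTop atTop := by
    rw [← tendsto_intCast_atTop_iff (R := ℝ)]
    simp only [hf]
    exact (p.tendsto_atTop_of_leadingCoeff_nonneg (natDegree_pos_iff_degree_pos.1
      (Nat.pos_of_ne_zero hdeg)) hp.le).comp tendsto_natCast_atTop_atTop
  exact exists_coloring_card_monochromaticSolutions_le hdeg hmono htend (half_pos hp)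
    fun z hz => (hf z).symm ▸ hN z hz

theorem few_monochromatic_solutions_general (d : ℕ) (hd : 2 ≤ d) (a : ℕ → ℤ) (ha : 0 < a d)
    (P : ℤ → ℤ) (hP : ∀ z, P z = ∑ i ∈ Finset.range (d + 1), a i * z ^ i) :
    ∃ C : ℝ, 0 < C ∧ ∃ n₀ : ℕ, ∀ n : ℕ, n₀ ≤ n →
      ∃ φ : ℕ → Bool,
        (((Finset.Icc 1 n ×ˢ Finset.Icc 1 n ×ˢ Finset.Icc 1 n).filter
            (fun v => (v.1 : ℤ) + v.2.1 = P v.2.2 ∧ φ v.1 = φ v.2.1 ∧ φ v.2.1 = φ v.2.2)).card : ℝ)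
          ≤ C * (n : ℝ) ^ ((2 : ℝ) / ((d : ℝ) ^ 2)) := by
  set p : ℝ[X] := ∑ i ∈ Finset.range (d + 1), C (a i : ℝ) * X ^ i
  have hcoeff : p.coeff d = a d := by simp [p]
  have hdeg : p.natDegree = d :=
    natDegree_eq_of_le_of_coeff_ne_zero
      (natDegree_sum_le_of_forall_le _ _ fun i hi =>
        (natDegree_C_mul_X_pow_le _ _).trans (Nat.lt_succ_iff.1 (Finset.mem_range.1 hi)))
      (by rw [hcoeff]; exact_mod_cast ha.ne')
  have hlead : 0 < p.leadingCoeff := by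
    rw [leadingCoeff, hdeg, hcoeff]
    exact_mod_cast ha
  have hP' : ∀ z : ℕ, (P z : ℝ) = p.eval (z : ℝ) := fun z => by
    simp [p, hP, eval_finsetSum]
  obtain ⟨C, hC, n₀, h⟩ :=
    exists_coloring_card_monochromaticSolutions_le_of_eval hlead (by omega) hP'
  rw [hdeg] at h
  exact ⟨C, hC, n₀, h⟩

theorem few_monochromatic_solutions (d : ℕ) (hd : 2 ≤ d) (a : ℕ → ℤ) (ha : 0 < a d)
    (P : ℤ → ℤ) (hP : ∀ z, P z = ∑ i ∈ Finset.range (d + 1), a i * z ^ i)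
    (hnonodd : ∃ z : ℕ, Even (P z)) :
    ∃ C : ℝ, 0 < C ∧ ∃ n₀ : ℕ, ∀ n : ℕ, n₀ ≤ n →
      ∃ φ : ℕ → Bool,
        (((Finset.Icc 1 n ×ˢ Finset.Icc 1 n ×ˢ Finset.Icc 1 n).filter
            (fun v => (v.1 : ℤ) + v.2.1 = P v.2.2 ∧ φ v.1 = φ v.2.1 ∧ φ v.2.1 = φ v.2.2)).card : ℝ)
          ≤ C * (n : ℝ) ^ ((2 : ℝ) / ((d : ℝ) ^ 2)) :=
  few_monochromatic_solutions_general d hd a ha P hP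
end

section
/- Let p(z) ∈ ℤ[z] have degree d ≥ 2 with positive leading coefficient a_d and m_s(k) = p(k+s) − p(k). There is a constant q depending only on p such that for all sufficiently large k: m_{i+1}(k) − m_i(k) ≤ q·m_1(k) for all i with k + i + 1 ≤ k₀(k), and m_{k₀(k)−k}(k) ≥ p(k) − q·m_1(k), where k₀(k) = max{t : p(t) < 2p(k) − 4m_1(k)}. Consequently, for every integer T ∈ [1, p(k)] there exists s ∈ [1, k₀(k) − k] with |m_s(k) − T| ≤ q·m_1(k). -/
/-
For large k the increments P(n + 1) - P(n) are at least n^(d-1) once n ≥ k, hence P is increasing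
there and m₁(k) ≥ k^(d-1); for n ≤ 2k they are at most a constant C times k^(d-1), hence at most
C·m₁(k). Comparing leading terms also gives P(k) > 5·m₁(k) and P(2k) ≥ 2P(k), which place the
threshold index k₀ strictly between k and 2k. So every step m_{i+1} - m_i before k₀ is at most
C·m₁, and m_{k₀-k} = P(k₀) - P(k) misses P(k) by at most 4·m₁ plus one step. A sequence whose steps
are at most g, starting at most g above T and ending at most g below it, passes within g of T.
-/

open Finset

section OrderedRing

variable {R : Type*} [CommRing R] [LinearOrder R] [IsStrictOrderedRing R]

lemma abs_sum_mul_le_of_abs_le {ι : Type*} {s : Finset ι} {a w : ι → R} {W : R}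
    (hw : ∀ i ∈ s, |w i| ≤ W) : |∑ i ∈ s, a i * w i| ≤ (∑ i ∈ s, |a i|) * W := by
  rw [sum_mul]
  refine (abs_sum_le_sum_abs _ _).trans (sum_le_sum fun i hi => ?_)
  rw [abs_mul]
  exact mul_le_mul_of_nonneg_left (hw i hi) (abs_nonneg _)

lemma abs_add_one_pow_sub_pow_le {x : R} (hx : 0 ≤ x) (i : ℕ) :
    |(x + 1) ^ i - x ^ i| ≤ i * (x + 1) ^ (i - 1) := by
  simpa [abs_of_nonneg hx, abs_of_nonneg (by linarith : (0 : R) ≤ x + 1)]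
    using abs_pow_sub_pow_le (x + 1) x i

lemma mul_pow_pred_le_add_one_pow_sub_pow {x : R} (hx : 0 ≤ x) (i : ℕ) :
    i * x ^ (i - 1) ≤ (x + 1) ^ i - x ^ i := by
  induction i with
  | zero => simp
  | succ i ih =>
    rcases i with _ | i
    · simp
    · have hxi : 0 ≤ x ^ i := pow_nonneg hx i
      simp only [Nat.add_sub_cancel, Nat.cast_add, Nat.cast_one, pow_succ] at ih ⊢
      nlinarith

end OrderedRing

lemma exists_abs_sub_le_of_sub_le {f : ℕ → ℤ} {g T : ℤ} {a b : ℕ} (hab : a ≤ b)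
    (hstep : ∀ n, a ≤ n → n < b → f (n + 1) - f n ≤ g) (ha : f a ≤ T + g) (hb : T ≤ f b + g) :
    ∃ n, a ≤ n ∧ n ≤ b ∧ |f n - T| ≤ g := by
  induction b, hab using Nat.le_induction with
  | base => exact ⟨a, le_rfl, le_rfl, abs_sub_le_iff.2 ⟨by linarith, by linarith⟩⟩
  | succ b hab ih =>
    by_cases hT : T ≤ f b + g
    · obtain ⟨n, han, hnb, hn⟩ := ih (fun n h₁ h₂ => hstep n h₁ (by omega)) hT
      exact ⟨n, han, by omega, hn⟩
    · have := hstep b hab (by omega)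
      exact ⟨b + 1, by omega, le_rfl, abs_sub_le_iff.2 ⟨by linarith, by linarith⟩⟩

lemma threshold_index_spec {P : ℤ → ℤ} {k k₀ : ℕ} {θ g : ℤ}
    (hmono : ∀ n : ℤ, k ≤ n → P n ≤ P (n + 1))
    (hgap : ∀ t : ℤ, 0 ≤ t → t ≤ 2 * k → P (t + 1) - P t ≤ g)
    (hk : P (k + 1) < θ) (h2k : θ ≤ P (2 * k)) (hk₀ : P k₀ < θ)
    (hmax : ∀ t : ℕ, P t < θ → t ≤ k₀) :
    k + 1 ≤ k₀ ∧ k₀ < 2 * k ∧ θ - g ≤ P k₀ := by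
  have hkk₀ : k + 1 ≤ k₀ := hmax (k + 1) (by exact_mod_cast hk)
  have hk₀2k : k₀ < 2 * k := by
    by_contra! h
    have hmonoOn : MonotoneOn P (Set.Ici (k : ℤ)) :=
      monotoneOn_of_le_succ Set.ordConnected_Ici fun n _ hn _ => by
        simpa [Order.succ_eq_add_one] using hmono n hn
    have := hmonoOn (Set.mem_Ici.2 (by omega)) (Set.mem_Ici.2 (by omega))
      (by exact_mod_cast h : ((2 * k : ℕ) : ℤ) ≤ k₀)
    push_cast at this
    omega
  have hθ : θ ≤ P (k₀ + 1) := by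
    by_contra! h
    have := hmax (k₀ + 1) (by exact_mod_cast h)
    omega
  exact ⟨hkk₀, hk₀2k, by linarith [hgap k₀ (by positivity) (by exact_mod_cast hk₀2k.le)]⟩

lemma threshold_cover {P : ℤ → ℤ} {k k₀ C : ℕ}
    (hmono : ∀ n : ℤ, k ≤ n → P n ≤ P (n + 1))
    (hgap : ∀ t : ℤ, 0 ≤ t → t ≤ 2 * k → P (t + 1) - P t ≤ C * (P (k + 1) - P k))
    (hk : 5 * (P (k + 1) - P k) < P k) (h2k : 2 * P k ≤ P (2 * k))
    (hk₀ : P k₀ < 2 * P k - 4 * (P (k + 1) - P k))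
    (hmax : ∀ t : ℕ, P t < 2 * P k - 4 * (P (k + 1) - P k) → t ≤ k₀) :
    (∀ i : ℕ, 1 ≤ i → k + i + 1 ≤ k₀ →
        (P ((k : ℤ) + i + 1) - P k) - (P ((k : ℤ) + i) - P k) ≤
          ((C + 4 : ℕ) : ℤ) * (P ((k : ℤ) + 1) - P k)) ∧
      P k - ((C + 4 : ℕ) : ℤ) * (P ((k : ℤ) + 1) - P k) ≤ P k₀ - P k ∧
      ∀ T : ℤ, 1 ≤ T → T ≤ P k →
        ∃ s : ℕ, 1 ≤ s ∧ k + s ≤ k₀ ∧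
          |(P ((k : ℤ) + s) - P k) - T| ≤ ((C + 4 : ℕ) : ℤ) * (P ((k : ℤ) + 1) - P k) := by
  set m₁ := P (k + 1) - P k
  have hm₁ : 0 ≤ m₁ := by linarith [hmono k le_rfl]
  obtain ⟨hkk₀, hk₀2k, hk₀low⟩ := threshold_index_spec hmono hgap
    (by linarith) (by linarith) hk₀ hmax
  have hstep : ∀ i : ℕ, 1 ≤ i → k + i + 1 ≤ k₀ →
      (P ((k : ℤ) + i + 1) - P k) - (P ((k : ℤ) + i) - P k) ≤ ((C + 4 : ℕ) : ℤ) * m₁ := by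
    intro i _ hi
    have := hgap (k + i) (by positivity) (by omega)
    push_cast
    linarith
  have hlast : P k - ((C + 4 : ℕ) : ℤ) * m₁ ≤ P k₀ - P k := by
    push_cast
    linarith
  refine ⟨hstep, hlast, fun T hT₁ hTk => ?_⟩
  obtain ⟨s, hs₁, hsk₀, hs⟩ := exists_abs_sub_le_of_sub_le
    (f := fun s : ℕ => P ((k : ℤ) + s) - P k) (g := ((C + 4 : ℕ) : ℤ) * m₁) (T := T)
    (by omega : 1 ≤ k₀ - k)
    (fun n hn _ => by
      simpa only [Nat.cast_add, Nat.cast_one, ← add_assoc] using hstep n hn (by omega))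
    (by push_cast; nlinarith)
    (by rw [Nat.cast_sub (by omega), add_sub_cancel]; linarith)
  exact ⟨s, hs₁, by omega, hs⟩

def coeffNorm (a : ℕ → ℤ) (n : ℕ) : ℕ := ∑ i ∈ range n, (a i).natAbs

lemma cast_coeffNorm (a : ℕ → ℤ) (n : ℕ) : (coeffNorm a n : ℤ) = ∑ i ∈ range n, |a i| := by
  simp [coeffNorm]

lemma coeffNorm_succ (a : ℕ → ℤ) (n : ℕ) : coeffNorm a (n + 1) = coeffNorm a n + (a n).natAbs :=
  sum_range_succ _ _

section Polynomial

variable {d : ℕ} {a : ℕ → ℤ} {P : ℤ → ℤ}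

lemma eval_sub_lead (hP : ∀ z, P z = ∑ i ∈ range (d + 1), a i * z ^ i) (z : ℤ) :
    P z - a d * z ^ d = ∑ i ∈ range d, a i * z ^ i := by
  rw [hP, sum_range_succ, add_sub_cancel_right]

lemma abs_eval_sub_lead_le (hP : ∀ z, P z = ∑ i ∈ range (d + 1), a i * z ^ i) {n : ℤ}
    (hn : 1 ≤ n) : |P n - a d * n ^ d| ≤ coeffNorm a d * n ^ (d - 1) := by
  rw [eval_sub_lead hP, cast_coeffNorm]
  refine abs_sum_mul_le_of_abs_le fun i hi => ?_
  rw [abs_of_nonneg (by positivity)]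
  exact pow_le_pow_right₀ hn (by grind)

lemma abs_sum_mul_add_one_pow_sub_pow_le (a : ℕ → ℤ) (e : ℕ) {n : ℤ} (hn : 0 ≤ n) :
    |∑ i ∈ range e, a i * ((n + 1) ^ i - n ^ i)| ≤
      coeffNorm a e * ((e - 1 : ℕ) * (n + 1) ^ (e - 2)) := by
  rw [cast_coeffNorm]
  refine abs_sum_mul_le_of_abs_le fun i hi => (abs_add_one_pow_sub_pow_le hn i).trans ?_
  have hie : i < e := mem_range.1 hi
  gcongr ?_ * ?_
  · exact_mod_cast (by omega : i ≤ e - 1)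
  · exact pow_le_pow_right₀ (by linarith) (by omega)

lemma incr_eq_sum (hP : ∀ z, P z = ∑ i ∈ range (d + 1), a i * z ^ i) (n : ℤ) :
    P (n + 1) - P n = ∑ i ∈ range (d + 1), a i * ((n + 1) ^ i - n ^ i) := by
  simp only [hP, mul_sub, sum_sub_distrib]

lemma abs_incr_sub_lead_le (hP : ∀ z, P z = ∑ i ∈ range (d + 1), a i * z ^ i) {n : ℤ}
    (hn : 0 ≤ n) : |P (n + 1) - P n - a d * ((n + 1) ^ d - n ^ d)| ≤
      coeffNorm a d * ((d - 1 : ℕ) * (n + 1) ^ (d - 2)) := by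
  rw [incr_eq_sum hP, sum_range_succ, add_sub_cancel_right]
  exact abs_sum_mul_add_one_pow_sub_pow_le a d hn

lemma incr_le (hP : ∀ z, P z = ∑ i ∈ range (d + 1), a i * z ^ i) {n : ℤ} (hn : 0 ≤ n) :
    P (n + 1) - P n ≤ coeffNorm a (d + 1) * (d * (n + 1) ^ (d - 1)) := by
  rw [incr_eq_sum hP]
  exact (le_abs_self _).trans (abs_sum_mul_add_one_pow_sub_pow_le a (d + 1) hn)

def incrBound (a : ℕ → ℤ) (d : ℕ) : ℕ := coeffNorm a (d + 1) * d * 3 ^ (d - 1)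

lemma incr_le_incrBound (hP : ∀ z, P z = ∑ i ∈ range (d + 1), a i * z ^ i) {k t : ℤ}
    (hk : 1 ≤ k) (ht₀ : 0 ≤ t) (ht : t ≤ 2 * k) :
    P (t + 1) - P t ≤ incrBound a d * k ^ (d - 1) := by
  have hpow : (t + 1) ^ (d - 1) ≤ 3 ^ (d - 1) * k ^ (d - 1) := by
    rw [← mul_pow]
    exact pow_le_pow_left₀ (by linarith) (by linarith) _
  calc P (t + 1) - P t ≤ coeffNorm a (d + 1) * (d * (t + 1) ^ (d - 1)) := incr_le hP ht₀
    _ ≤ coeffNorm a (d + 1) * (d * (3 ^ (d - 1) * k ^ (d - 1))) := by gcongr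
    _ = incrBound a d * k ^ (d - 1) := by push_cast [incrBound]; ring

lemma pow_pred_le_incr (hP : ∀ z, P z = ∑ i ∈ range (d + 1), a i * z ^ i) (hd : 2 ≤ d)
    (ha : 0 < a d) {n : ℤ} (hn₁ : 1 ≤ n) (hn : coeffNorm a d * 2 ^ (d - 2) ≤ n) :
    n ^ (d - 1) ≤ P (n + 1) - P n := by
  obtain ⟨m, rfl⟩ : ∃ m, d = m + 2 := ⟨d - 2, by omega⟩
  have hlow := (abs_le.1 (abs_incr_sub_lead_le hP (by linarith : (0 : ℤ) ≤ n))).1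
  have hlead := mul_pow_pred_le_add_one_pow_sub_pow (by linarith : (0 : ℤ) ≤ n) (m + 2)
  simp only [show m + 2 - 1 = m + 1 by omega, Nat.add_sub_cancel] at hn hlow hlead ⊢
  push_cast at hlow hlead
  set B : ℤ := (coeffNorm a (m + 2) : ℤ)
  set X := (n + 1) ^ (m + 2) - n ^ (m + 2)
  have hX : 0 ≤ X := le_trans (by positivity) hlead
  have hpow : (n + 1) ^ m ≤ 2 ^ m * n ^ m := by
    rw [← mul_pow]
    exact pow_le_pow_left₀ (by linarith) (by linarith) _
  calc n ^ (m + 1) = (m + 2) * n ^ (m + 1) - (m + 1) * (n * n ^ m) := by ring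
    _ ≤ X - (m + 1) * (B * (2 ^ m * n ^ m)) := by
        rw [← mul_assoc B]
        gcongr
    _ ≤ X - B * ((m + 1) * (n + 1) ^ m) := by
        have : B * (n + 1) ^ m ≤ B * (2 ^ m * n ^ m) := by gcongr
        nlinarith
    _ ≤ a (m + 2) * X - B * ((m + 1) * (n + 1) ^ m) := by
        gcongr
        exact le_mul_of_one_le_left hX ha
    _ ≤ P (n + 1) - P n := by linarith

lemma eval_le_eval_add_one (hP : ∀ z, P z = ∑ i ∈ range (d + 1), a i * z ^ i) (hd : 2 ≤ d)
    (ha : 0 < a d) {n : ℤ} (hn₁ : 1 ≤ n) (hn : coeffNorm a d * 2 ^ (d - 2) ≤ n) :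
    P n ≤ P (n + 1) := by
  linarith [pow_pred_le_incr hP hd ha hn₁ hn, pow_nonneg (by linarith : (0 : ℤ) ≤ n) (d - 1)]

lemma incr_le_incrBound_mul_incr (hP : ∀ z, P z = ∑ i ∈ range (d + 1), a i * z ^ i)
    (hd : 2 ≤ d) (ha : 0 < a d) {k t : ℤ} (hk₁ : 1 ≤ k) (hk : coeffNorm a d * 2 ^ (d - 2) ≤ k)
    (ht₀ : 0 ≤ t) (ht : t ≤ 2 * k) :
    P (t + 1) - P t ≤ incrBound a d * (P (k + 1) - P k) := by
  calc P (t + 1) - P t ≤ incrBound a d * k ^ (d - 1) := incr_le_incrBound hP hk₁ ht₀ ht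
    _ ≤ incrBound a d * (P (k + 1) - P k) := by
        gcongr
        exact pow_pred_le_incr hP hd ha hk₁ hk

lemma five_mul_incr_lt_eval (hP : ∀ z, P z = ∑ i ∈ range (d + 1), a i * z ^ i) (hd : 1 ≤ d)
    (ha : 0 < a d) {k : ℤ} (hk : coeffNorm a d + 5 * incrBound a d < k) :
    5 * (P (k + 1) - P k) < P k := by
  have hk₁ : 1 ≤ k := by
    have : (0 : ℤ) ≤ coeffNorm a d + 5 * incrBound a d := by positivity
    linarith
  have hincr := incr_le_incrBound hP hk₁ (by linarith) (by linarith : k ≤ 2 * k)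
  have hlead := (abs_le.1 (abs_eval_sub_lead_le hP hk₁)).1
  have hkd : k ^ d = k * k ^ (d - 1) := by rw [← pow_succ']; congr 1; omega
  have hu : 1 ≤ k ^ (d - 1) := one_le_pow₀ hk₁
  rw [hkd] at hlead
  nlinarith [mul_le_mul_of_nonneg_right (by linarith : (1 : ℤ) ≤ a d)
    (by positivity : (0 : ℤ) ≤ k * k ^ (d - 1))]

lemma two_mul_eval_le_eval_two_mul (hP : ∀ z, P z = ∑ i ∈ range (d + 1), a i * z ^ i)
    (hd : 2 ≤ d) (ha : 0 < a d) {k : ℤ} (hk₁ : 1 ≤ k) (hk : 2 * coeffNorm a d ≤ k) :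
    2 * P k ≤ P (2 * k) := by
  obtain ⟨m, rfl⟩ : ∃ m, d = m + 2 := ⟨d - 2, by omega⟩
  have hup := (abs_le.1 (abs_eval_sub_lead_le hP hk₁)).2
  have hlow := (abs_le.1 (abs_eval_sub_lead_le hP (by linarith : (1 : ℤ) ≤ 2 * k))).1
  simp only [show m + 2 - 1 = m + 1 by omega, mul_pow] at hup hlow
  set u := k ^ (m + 1)
  set v : ℤ := 2 ^ m
  have hku : k ^ (m + 2) = k * u := by ring
  have h2v : (2 : ℤ) ^ (m + 1) = 2 * v := by ring
  have h4v : (2 : ℤ) ^ (m + 2) = 4 * v := by ring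
  have hu : 1 ≤ u := one_le_pow₀ hk₁
  have hv : 1 ≤ v := one_le_pow₀ (by norm_num)
  rw [hku, h2v, h4v] at hlow
  rw [hku] at hup
  have hB : (0 : ℤ) ≤ coeffNorm a (m + 2) := by positivity
  have huv : 0 ≤ u * (4 * v - 2) := mul_nonneg (by linarith) (by linarith)
  have hkuv : 0 ≤ k * u * (4 * v - 2) := by rw [mul_assoc]; exact mul_nonneg (by linarith) huv
  nlinarith [mul_le_mul_of_nonneg_right (by linarith : (1 : ℤ) ≤ a (m + 2)) hkuv,
    mul_le_mul_of_nonneg_right hk huv,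
    mul_nonneg (mul_nonneg hB (by linarith : (0 : ℤ) ≤ u)) (by linarith : (0 : ℤ) ≤ v - 1)]

end Polynomial

theorem increments_cover (d : ℕ) (hd : 2 ≤ d) (a : ℕ → ℤ) (ha : 0 < a d)
    (P : ℤ → ℤ) (hP : ∀ z, P z = ∑ i ∈ Finset.range (d + 1), a i * z ^ i) :
    ∃ q : ℕ, 0 < q ∧ ∃ K : ℕ, ∀ k : ℕ, K ≤ k →
      ∀ k0 : ℕ,
        (P k0 < 2 * P k - 4 * (P ((k : ℤ) + 1) - P k) ∧
          ∀ t : ℕ, P t < 2 * P k - 4 * (P ((k : ℤ) + 1) - P k) → t ≤ k0) →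
        ((∀ i : ℕ, 1 ≤ i → k + i + 1 ≤ k0 →
            (P ((k : ℤ) + i + 1) - P k) - (P ((k : ℤ) + i) - P k) ≤
              (q : ℤ) * (P ((k : ℤ) + 1) - P k)) ∧
         P k - (q : ℤ) * (P ((k : ℤ) + 1) - P k) ≤ P k0 - P k ∧
         ∀ T : ℤ, 1 ≤ T → T ≤ P k →
           ∃ s : ℕ, 1 ≤ s ∧ k + s ≤ k0 ∧
             |(P ((k : ℤ) + s) - P k) - T| ≤ (q : ℤ) * (P ((k : ℤ) + 1) - P k)) := by
  set C := incrBound a d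
  refine ⟨C + 4, by omega, 2 ^ d * coeffNorm a (d + 1) + 5 * C + 1,
    fun k hk k₀ ⟨hk₀, hk₀max⟩ => ?_⟩
  have hB : coeffNorm a d ≤ coeffNorm a (d + 1) := by rw [coeffNorm_succ]; omega
  have h2d : 2 ^ (d - 2) ≤ 2 ^ d := Nat.pow_le_pow_right two_pos (by omega)
  have h2 : 2 ≤ 2 ^ d := Nat.le_self_pow (by omega) 2
  have hk₁ : (1 : ℤ) ≤ k := by exact_mod_cast (by omega : 1 ≤ k)
  have hkB : (coeffNorm a d * 2 ^ (d - 2) : ℤ) ≤ k := by exact_mod_cast (by nlinarith)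
  have hk5 : (coeffNorm a d + 5 * C : ℤ) < k := by exact_mod_cast (by nlinarith)
  have hk2 : (2 * coeffNorm a d : ℤ) ≤ k := by exact_mod_cast (by nlinarith)
  exact threshold_cover
    (fun n hn => eval_le_eval_add_one hP hd ha (by linarith) (by linarith))
    (fun t ht₀ ht => incr_le_incrBound_mul_incr hP hd ha hk₁ hkB ht₀ ht)
    (five_mul_incr_lt_eval hP (by omega) ha hk5)
    (two_mul_eval_le_eval_two_mul hP hd ha hk₁ hk2) hk₀ hk₀max
end
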